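/- arXiv:2005.10032 — 5 statements merged into one kernel-verified Lean document; each statement's English description precedes it below -/
import Mathlib

section
/- Let n ≥ 1, p ∈ (1,∞), and let ν be a positive integer. If f : 𝔹_{ℓ₂ⁿ} → 𝔹_{ℓ_p^ν} is a pluriharmonic function, then for every z ∈ 𝔹_{ℓ₂ⁿ}, |∇‖f(z)‖_p| ≤ (4/π) · 1/(1 − ‖z‖₂²). -/
open scoped BigOperators Topology
open Filter

/-- The `p`-norm `(∑ ‖z j‖^p)^(1/p)` on `ℂ^ν` for a real exponent `p`. -/
noncomputable def pnormC {ν : ℕ} (p : ℝ) (z : Fin ν → ℂ) : ℝ :=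
  (∑ j, ‖z j‖ ^ p) ^ (1 / p)

/-- `|∇‖f(z)‖_p| = limsup_{w → z} |‖f(w)‖_p - ‖f(z)‖_p| / ‖w - z‖₂`. -/
noncomputable def gradPnormC {n ν : ℕ} (p : ℝ)
    (f : EuclideanSpace ℂ (Fin n) → (Fin ν → ℂ)) (z : EuclideanSpace ℂ (Fin n)) : ℝ :=
  Filter.limsup (fun w => |pnormC p (f w) - pnormC p (f z)| / ‖w - z‖) (𝓝[≠] z)

/-
Fix `w` and, by Hahn–Banach, a functional `c` of `ℓ_p^ν`-dual norm `≤ 1` with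
`∑ c_j f_j(w) = ‖f(w)‖_p`. Then `Re ∑ c_j f_j` is the real part of the holomorphic function
`F = ∑ c_j h_j + conj c_j g_j`, which maps the ball into the strip `|Re| < 1`. Since
`ζ ↦ tan (π ζ / 4)` maps that strip into the unit disc, the Schwarz–Pick lemma on each complex
line through `z` gives `‖dF(z)‖ ≤ (4/π) / (1 - ‖z‖²)`. On the ball of radius `ρ < 1` the mean value inequality yields
`‖f(w)‖_p - ‖f(w')‖_p ≤ Re F(w) - Re F(w') ≤ (4/π) / (1 - ρ²) ‖w - w'‖`,
and letting `ρ ↓ ‖z‖` bounds the limsup.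
-/

open Complex ComplexConjugate Metric Set

noncomputable def mobius (a z : ℂ) : ℂ := (z + a) / (1 + conj a * z)

theorem one_add_conj_mul_ne_zero {a z : ℂ} (ha : ‖a‖ < 1) (hz : ‖z‖ < 1) :
    1 + conj a * z ≠ 0 := by
  intro h
  have : ‖conj a * z‖ = 1 := by rw [eq_neg_of_add_eq_zero_right h, norm_neg, norm_one]
  rw [norm_mul, RCLike.norm_conj] at this
  nlinarith [norm_nonneg a, norm_nonneg z]

theorem normSq_one_add_conj_mul_sub_normSq_add (a z : ℂ) :
    normSq (1 + conj a * z) - normSq (z + a) = (1 - normSq a) * (1 - normSq z) := by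
  simp only [normSq_apply, add_re, add_im, mul_re, mul_im, one_re, one_im, conj_re, conj_im]
  ring

theorem norm_mobius_lt_one {a z : ℂ} (ha : ‖a‖ < 1) (hz : ‖z‖ < 1) : ‖mobius a z‖ < 1 := by
  have hD := one_add_conj_mul_ne_zero ha hz
  rw [mobius, norm_div, div_lt_one (norm_pos_iff.2 hD), ← sq_lt_sq₀ (norm_nonneg _) (norm_nonneg _),
    ← normSq_eq_norm_sq, ← normSq_eq_norm_sq, ← sub_pos, normSq_one_add_conj_mul_sub_normSq_add,
    normSq_eq_norm_sq, normSq_eq_norm_sq]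
  nlinarith [sq_lt_one_iff₀ (norm_nonneg a) |>.2 ha, sq_lt_one_iff₀ (norm_nonneg z) |>.2 hz]

theorem mobius_zero (a : ℂ) : mobius a 0 = a := by simp [mobius]

theorem mobius_neg_self (a : ℂ) : mobius (-a) a = 0 := by simp [mobius]

theorem hasDerivAt_mobius {a z : ℂ} (hD : 1 + conj a * z ≠ 0) :
    HasDerivAt (mobius a) ((1 - conj a * a) / (1 + conj a * z) ^ 2) z := by
  have hnum : HasDerivAt (fun w : ℂ => w + a) 1 z := (hasDerivAt_id z).add_const a
  have hden : HasDerivAt (fun w : ℂ => 1 + conj a * w) (conj a) z := by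
    simpa using ((hasDerivAt_id z).const_mul (conj a)).const_add 1
  exact (hnum.div hden hD).congr_deriv (by ring)

theorem hasDerivAt_mobius_zero (a : ℂ) : HasDerivAt (mobius a) (1 - ‖a‖ ^ 2 : ℝ) 0 := by
  convert hasDerivAt_mobius (a := a) (z := 0) (by simp) using 1
  rw [conj_mul']
  push_cast; ring

theorem hasDerivAt_mobius_neg_self {a : ℂ} (ha : ‖a‖ < 1) :
    HasDerivAt (mobius (-a)) (1 / (1 - ‖a‖ ^ 2) : ℝ) a := by
  convert hasDerivAt_mobius (a := -a) (z := a) (one_add_conj_mul_ne_zero (by simpa) ha) using 1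
  rw [map_neg, neg_mul_neg, neg_mul, ← sub_eq_add_neg, conj_mul']
  push_cast
  field_simp

/-- The Schwarz–Pick lemma: conjugating `G` by disc automorphisms moving `0` to `z` and `G z`
to `0` reduces it to the Schwarz lemma. -/
theorem norm_deriv_mul_le_of_mapsTo_ball {G : ℂ → ℂ} (hG : DifferentiableOn ℂ G (ball 0 1))
    (hmaps : MapsTo G (ball 0 1) (ball 0 1)) {z : ℂ} (hz : ‖z‖ < 1) :
    ‖deriv G z‖ * (1 - ‖z‖ ^ 2) ≤ 1 - ‖G z‖ ^ 2 := by
  set β := G z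
  have hβ : ‖β‖ < 1 := mem_ball_zero_iff.1 (hmaps (mem_ball_zero_iff.2 hz))
  have hmob : MapsTo (mobius z) (ball 0 1) (ball 0 1) := fun w hw =>
    mem_ball_zero_iff.2 (norm_mobius_lt_one hz (mem_ball_zero_iff.1 hw))
  set H := mobius (-β) ∘ G ∘ mobius z
  have hH : DifferentiableOn ℂ H (ball 0 1) := by
    intro w hw
    have hw' := hmob hw
    have hGw := mem_ball_zero_iff.1 (hmaps hw')
    refine DifferentiableAt.differentiableWithinAt ?_
    refine (hasDerivAt_mobius (one_add_conj_mul_ne_zero (by simpa) hGw)).differentiableAt.comp w ?_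
    exact (hG.differentiableAt (isOpen_ball.mem_nhds hw')).comp w
      (hasDerivAt_mobius (one_add_conj_mul_ne_zero hz (mem_ball_zero_iff.1 hw))).differentiableAt
  have hH0 : H 0 = 0 := by simp [H, mobius_zero, mobius_neg_self, β]
  have hHmaps : MapsTo H (ball 0 1) (closedBall (H 0) 1) := by
    rw [hH0]
    intro w hw
    exact mem_closedBall_zero_iff.2 (norm_mobius_lt_one (by simpa)
      (mem_ball_zero_iff.1 (hmaps (hmob hw)))).le
  have hschwarz := Complex.norm_deriv_le_one_of_mapsTo_ball hH hHmaps one_pos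
  have hderiv : HasDerivAt H ((1 / (1 - ‖β‖ ^ 2) : ℝ) * (deriv G z * (1 - ‖z‖ ^ 2 : ℝ))) 0 := by
    have hGz : HasDerivAt G (deriv G z) (mobius z 0) := by
      rw [mobius_zero]
      exact (hG.differentiableAt (isOpen_ball.mem_nhds (mem_ball_zero_iff.2 hz))).hasDerivAt
    have hβ' : HasDerivAt (mobius (-β)) (1 / (1 - ‖β‖ ^ 2) : ℝ) (G (mobius z 0)) := by
      rw [mobius_zero]; exact hasDerivAt_mobius_neg_self hβ
    exact hβ'.comp 0 (hGz.comp 0 (hasDerivAt_mobius_zero z))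
  have hβsq : 0 < 1 - ‖β‖ ^ 2 := by nlinarith [norm_nonneg β]
  have hzsq : 0 < 1 - ‖z‖ ^ 2 := by nlinarith [norm_nonneg z]
  rwa [hderiv.deriv, norm_mul, norm_mul, norm_real, norm_real, Real.norm_of_nonneg hzsq.le,
    Real.norm_of_nonneg (by positivity), one_div, inv_mul_le_iff₀ hβsq, mul_one] at hschwarz

namespace Complex

theorem normSq_cos_sub_normSq_sin (w : ℂ) :
    normSq (cos w) - normSq (sin w) = Real.cos (2 * w.re) := by
  have hsin : sin w =
      (Real.sin w.re * Real.cosh w.im : ℝ) + (Real.cos w.re * Real.sinh w.im : ℝ) * I := by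
    rw [sin_eq]; push_cast; ring
  have hcos : cos w =
      (Real.cos w.re * Real.cosh w.im : ℝ) + (-Real.sin w.re * Real.sinh w.im : ℝ) * I := by
    rw [cos_eq]; push_cast; ring
  rw [hsin, hcos, normSq_add_mul_I, normSq_add_mul_I, Real.cos_two_mul]
  linear_combination (Real.cos w.re ^ 2 - Real.sin w.re ^ 2) * Real.cosh_sq_sub_sinh_sq w.im
    - Real.sin_sq_add_cos_sq w.re

theorem normSq_sin_lt_normSq_cos {w : ℂ} (hw : 0 < Real.cos (2 * w.re)) :
    normSq (sin w) < normSq (cos w) := by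
  linarith [normSq_cos_sub_normSq_sin w]

theorem cos_ne_zero_of_cos_two_mul_re_pos {w : ℂ} (hw : 0 < Real.cos (2 * w.re)) :
    cos w ≠ 0 := by
  intro h
  have := normSq_sin_lt_normSq_cos hw
  rw [h, map_zero] at this
  exact (normSq_nonneg _).not_gt this

theorem norm_tan_lt_one {w : ℂ} (hw : 0 < Real.cos (2 * w.re)) : ‖tan w‖ < 1 := by
  have hcos := cos_ne_zero_of_cos_two_mul_re_pos hw
  rw [tan_eq_sin_div_cos, norm_div, div_lt_one (norm_pos_iff.2 hcos), ← sq_lt_sq₀ (norm_nonneg _)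
    (norm_nonneg _), ← normSq_eq_norm_sq, ← normSq_eq_norm_sq]
  exact normSq_sin_lt_normSq_cos hw

theorem one_sub_norm_tan_sq_le {w : ℂ} (hw : cos w ≠ 0) :
    1 - ‖tan w‖ ^ 2 ≤ ‖1 / cos w ^ 2‖ := by
  have h : 1 / cos w ^ 2 = 1 + tan w ^ 2 := by
    rw [tan_eq_sin_div_cos]
    field_simp
    exact (cos_sq_add_sin_sq w).symm
  calc 1 - ‖tan w‖ ^ 2 = ‖(1 : ℂ)‖ - ‖-tan w ^ 2‖ := by simp
    _ ≤ ‖1 - -tan w ^ 2‖ := norm_sub_norm_le _ _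
    _ = ‖1 / cos w ^ 2‖ := by rw [h, sub_neg_eq_add]

end Complex

theorem norm_deriv_mul_le_of_abs_re_lt_one {φ : ℂ → ℂ} (hφ : DifferentiableOn ℂ φ (ball 0 1))
    (hre : ∀ t ∈ ball (0 : ℂ) 1, |(φ t).re| < 1) {z : ℂ} (hz : ‖z‖ < 1) :
    ‖deriv φ z‖ * (1 - ‖z‖ ^ 2) ≤ 4 / Real.pi := by
  have hπ := Real.pi_pos
  set κ : ℂ := ((Real.pi / 4 : ℝ) : ℂ)
  set G : ℂ → ℂ := fun t => tan (κ * φ t)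
  -- `w ↦ tan (π w / 4)` maps the strip `|Re w| < 1` into the unit disc
  have hcos2 : ∀ t ∈ ball (0 : ℂ) 1, 0 < Real.cos (2 * (κ * φ t).re) := by
    intro t ht
    have h := abs_lt.1 (hre t ht)
    apply Real.cos_pos_of_mem_Ioo
    simp only [κ, re_ofReal_mul]
    constructor <;> nlinarith
  have hGderiv : ∀ t ∈ ball (0 : ℂ) 1,
      HasDerivAt G (1 / cos (κ * φ t) ^ 2 * (κ * deriv φ t)) t := by
    intro t ht
    have htan := hasDerivAt_tan (cos_ne_zero_of_cos_two_mul_re_pos (hcos2 t ht))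
    exact htan.comp t ((hφ.differentiableAt (isOpen_ball.mem_nhds ht)).hasDerivAt.const_mul κ)
  have hG : DifferentiableOn ℂ G (ball 0 1) := fun t ht =>
    (hGderiv t ht).differentiableAt.differentiableWithinAt
  have hGmaps : MapsTo G (ball 0 1) (ball 0 1) := fun t ht =>
    mem_ball_zero_iff.2 (norm_tan_lt_one (hcos2 t ht))
  have hzmem : z ∈ ball (0 : ℂ) 1 := mem_ball_zero_iff.2 hz
  have hpick := norm_deriv_mul_le_of_mapsTo_ball hG hGmaps hz
  have htan := one_sub_norm_tan_sq_le (cos_ne_zero_of_cos_two_mul_re_pos (hcos2 z hzmem))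
  have htanpos : 0 < 1 - ‖G z‖ ^ 2 := by
    have := norm_tan_lt_one (hcos2 z hzmem)
    nlinarith [norm_nonneg (G z)]
  rw [(hGderiv z hzmem).deriv, norm_mul, norm_mul, norm_real, Real.norm_of_nonneg (by positivity)]
    at hpick
  rw [le_div_iff₀ hπ]
  nlinarith [norm_nonneg (deriv φ z), norm_nonneg z]

section InnerProductSpace

variable {E : Type*} [NormedAddCommGroup E] [InnerProductSpace ℂ E]

theorem norm_add_smul_sq_of_inner_eq_zero {x v : E} (h : inner ℂ v x = 0) (s : ℂ) :
    ‖x + s • v‖ ^ 2 = ‖x‖ ^ 2 + ‖s‖ ^ 2 * ‖v‖ ^ 2 := by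
  have hxv : inner ℂ x (s • v) = 0 := by
    rw [inner_smul_right, ← inner_conj_symm, h, map_zero, mul_zero]
  simp only [sq]
  rw [norm_add_sq_eq_norm_sq_add_norm_sq_of_inner_eq_zero x (s • v) hxv, norm_smul]
  ring

/-- The complex line through `z` in direction `u` cuts the unit ball in a disc, parametrized
affinely by the unit disc with `z` at the parameter `s₀`. -/
theorem exists_affine_disc_through {z u : E} (hz : ‖z‖ < 1) (hu : ‖u‖ = 1) :
    ∃ (x : E) (r : ℝ) (s₀ : ℂ), 0 < r ∧ r ≤ 1 ∧ ‖s₀‖ < 1 ∧ x + s₀ • (r : ℂ) • u = z ∧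
      r ^ 2 * (1 - ‖s₀‖ ^ 2) = 1 - ‖z‖ ^ 2 ∧
      MapsTo (fun s : ℂ => x + s • (r : ℂ) • u) (ball 0 1) (ball 0 1) := by
  set b : ℂ := inner ℂ u z
  set x : E := z - b • u
  have hux : inner ℂ u x = 0 := by
    rw [inner_sub_right, inner_smul_right, inner_self_eq_norm_sq_to_K, hu]; simp [b]
  have hz_sq : ‖z‖ ^ 2 = ‖x‖ ^ 2 + ‖b‖ ^ 2 := by
    simpa [hu, x] using norm_add_smul_sq_of_inner_eq_zero hux b
  set r : ℝ := √(1 - ‖x‖ ^ 2)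
  have hr_sq : r ^ 2 = 1 - ‖x‖ ^ 2 := Real.sq_sqrt (by nlinarith [norm_nonneg b, norm_nonneg z])
  have hr : 0 < r := Real.sqrt_pos.2 (by nlinarith [norm_nonneg b, norm_nonneg z])
  have hvx : inner ℂ ((r : ℂ) • u) x = 0 := by simp [hux]
  have hs₀_sq : ‖b / r‖ ^ 2 * r ^ 2 = ‖b‖ ^ 2 := by simp [div_pow, hr.ne']
  have hs₀_sq_lt : ‖b / r‖ ^ 2 < 1 := by
    have : ‖b / r‖ ^ 2 * r ^ 2 < 1 * r ^ 2 := by nlinarith [norm_nonneg z]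
    exact lt_of_mul_lt_mul_right this (sq_nonneg r)
  refine ⟨x, r, b / r, hr, Real.sqrt_le_one.2 (by nlinarith [norm_nonneg x]),
    (sq_lt_one_iff₀ (norm_nonneg _)).1 hs₀_sq_lt, ?_, by nlinarith, fun s hs => ?_⟩
  · simp only [x, smul_smul, div_mul_cancel₀ _ (ofReal_ne_zero.2 hr.ne')]
    abel
  · rw [mem_ball_zero_iff] at hs ⊢
    have hs_sq : ‖s‖ ^ 2 < 1 := by nlinarith [norm_nonneg s]
    have hσ_sq := norm_add_smul_sq_of_inner_eq_zero hvx s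
    rw [norm_smul, norm_real, Real.norm_of_nonneg hr.le, hu, mul_one] at hσ_sq
    refine (sq_lt_one_iff₀ (norm_nonneg _)).1 ?_
    nlinarith [mul_lt_mul_of_pos_right hs_sq (pow_pos hr 2)]

theorem norm_fderiv_apply_mul_le_of_abs_re_lt_one {F : E → ℂ}
    (hF : DifferentiableOn ℂ F (ball 0 1)) (hre : ∀ ξ ∈ ball (0 : E) 1, |(F ξ).re| < 1)
    {z : E} (hz : ‖z‖ < 1) {u : E} (hu : ‖u‖ = 1) :
    ‖fderiv ℂ F z u‖ * (1 - ‖z‖ ^ 2) ≤ 4 / Real.pi := by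
  obtain ⟨x, r, s₀, hr, hr1, hs₀, hσs₀, hr_s₀, hσ_maps⟩ := exists_affine_disc_through hz hu
  set σ : ℂ → E := fun s => x + s • (r : ℂ) • u
  have hσ : ∀ s, HasDerivAt σ ((r : ℂ) • u) s := fun s => by
    have := ((hasDerivAt_id s).smul_const ((r : ℂ) • u)).const_add x
    rwa [one_smul] at this
  have hderiv : HasDerivAt (F ∘ σ) (r * fderiv ℂ F z u) s₀ := by
    have hFz : HasFDerivAt F (fderiv ℂ F z) (σ s₀) := by
      rw [show σ s₀ = z from hσs₀]
      exact (hF.differentiableAt (isOpen_ball.mem_nhds (mem_ball_zero_iff.2 hz))).hasFDerivAt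
    simpa using hFz.comp_hasDerivAt s₀ (hσ s₀)
  have hslice := norm_deriv_mul_le_of_abs_re_lt_one
    (fun s hs => ((hF.differentiableAt (isOpen_ball.mem_nhds (hσ_maps hs))).comp s
      (hσ s).differentiableAt).differentiableWithinAt)
    (fun s hs => hre _ (hσ_maps hs)) hs₀
  rw [hderiv.deriv, norm_mul, norm_real, Real.norm_of_nonneg hr.le] at hslice
  have hs₀_sq : ‖s₀‖ ^ 2 < 1 := (sq_lt_one_iff₀ (norm_nonneg _)).2 hs₀
  calc ‖fderiv ℂ F z u‖ * (1 - ‖z‖ ^ 2) = r * (r * ‖fderiv ℂ F z u‖ * (1 - ‖s₀‖ ^ 2)) := by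
        rw [← hr_s₀]; ring
    _ ≤ 1 * (4 / Real.pi) :=
        mul_le_mul hr1 hslice
          (mul_nonneg (mul_nonneg hr.le (norm_nonneg _)) (by linarith)) zero_le_one
    _ = 4 / Real.pi := one_mul _

theorem norm_fderiv_le_of_abs_re_lt_one {F : E → ℂ}
    (hF : DifferentiableOn ℂ F (ball 0 1)) (hre : ∀ ξ ∈ ball (0 : E) 1, |(F ξ).re| < 1)
    {z : E} (hz : ‖z‖ < 1) :
    ‖fderiv ℂ F z‖ ≤ 4 / Real.pi / (1 - ‖z‖ ^ 2) := by
  have hz_sq : 0 < 1 - ‖z‖ ^ 2 := by nlinarith [norm_nonneg z]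
  refine ContinuousLinearMap.opNorm_le_of_unit_norm (by positivity) fun u hu => ?_
  rw [le_div_iff₀ hz_sq]
  exact norm_fderiv_apply_mul_le_of_abs_re_lt_one hF hre hz hu

theorem norm_sub_le_of_abs_re_lt_one {F : E → ℂ}
    (hF : DifferentiableOn ℂ F (ball 0 1)) (hre : ∀ ξ ∈ ball (0 : E) 1, |(F ξ).re| < 1)
    {ρ : ℝ} (hρ : ρ < 1) {w w' : E} (hw : w ∈ ball (0 : E) ρ) (hw' : w' ∈ ball (0 : E) ρ) :
    ‖F w - F w'‖ ≤ 4 / Real.pi / (1 - ρ ^ 2) * ‖w - w'‖ := by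
  have hsub : ball (0 : E) ρ ⊆ ball 0 1 := ball_subset_ball hρ.le
  refine (convex_ball 0 ρ).norm_image_sub_le_of_norm_fderiv_le
    (fun ξ hξ => hF.differentiableAt (isOpen_ball.mem_nhds (hsub hξ))) (fun ξ hξ => ?_) hw' hw
  have hξ := mem_ball_zero_iff.1 hξ
  have hρ_sq : 0 < 1 - ρ ^ 2 := by nlinarith [norm_nonneg ξ]
  refine (norm_fderiv_le_of_abs_re_lt_one hF hre (hξ.trans hρ)).trans ?_
  gcongr

end InnerProductSpace

theorem pnormC_eq_norm_toLp {ν : ℕ} {p : ℝ} (hp : 0 < p) (y : Fin ν → ℂ) :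
    pnormC p y = ‖WithLp.toLp (ENNReal.ofReal p) y‖ := by
  rw [PiLp.norm_eq_sum (by rwa [ENNReal.toReal_ofReal hp.le]), ENNReal.toReal_ofReal hp.le, pnormC]

theorem LinearMap.apply_eq_sum_mul_single {ν : ℕ} (ℓ : (Fin ν → ℂ) →ₗ[ℂ] ℂ) (y : Fin ν → ℂ) :
    ℓ y = ∑ j, ℓ (Pi.single j 1) * y j := by
  rw [ℓ.pi_apply_eq_sum_univ y]
  refine Finset.sum_congr rfl fun j _ => ?_
  rw [smul_eq_mul, mul_comm]
  congr
  ext i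
  simp [Pi.single_apply, eq_comm]

theorem exists_dual_pnormC {ν : ℕ} {p : ℝ} (hp : 1 ≤ p) (x : Fin ν → ℂ) :
    ∃ c : Fin ν → ℂ, (∀ y, ‖∑ j, c j * y j‖ ≤ pnormC p y) ∧ ∑ j, c j * x j = pnormC p x := by
  have : Fact (1 ≤ ENNReal.ofReal p) := ⟨ENNReal.one_le_ofReal.2 hp⟩
  obtain ⟨g, hg, hgx⟩ := exists_dual_vector'' ℂ (WithLp.toLp (ENNReal.ofReal p) x)
  set ℓ : (Fin ν → ℂ) →ₗ[ℂ] ℂ :=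
    g.toLinearMap ∘ₗ (WithLp.linearEquiv (ENNReal.ofReal p) ℂ (Fin ν → ℂ)).symm.toLinearMap
  have hℓ : ∀ y, g (WithLp.toLp (ENNReal.ofReal p) y) = ∑ j, ℓ (Pi.single j 1) * y j :=
    ℓ.apply_eq_sum_mul_single
  refine ⟨fun j => ℓ (Pi.single j 1), fun y => ?_, ?_⟩
  · rw [← hℓ, pnormC_eq_norm_toLp (by linarith)]
    exact (g.le_opNorm _).trans (mul_le_of_le_one_left (norm_nonneg _) hg)
  · rw [← hℓ, hgx, pnormC_eq_norm_toLp (by linarith)]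
    rfl

section Pluriharmonic

variable {E : Type*} [NormedAddCommGroup E] [InnerProductSpace ℂ E] {ν : ℕ} {p : ℝ}
  {f h g : E → Fin ν → ℂ}

theorem pnormC_sub_le_of_pluriharmonic (hp : 1 ≤ p)
    (hh : DifferentiableOn ℂ h (ball 0 1)) (hg : DifferentiableOn ℂ g (ball 0 1))
    (hfd : ∀ z ∈ ball (0 : E) 1, ∀ j, f z j = h z j + conj (g z j))
    (hmap : ∀ z ∈ ball (0 : E) 1, pnormC p (f z) < 1)
    {ρ : ℝ} (hρ : ρ < 1) {w w' : E} (hw : w ∈ ball (0 : E) ρ) (hw' : w' ∈ ball (0 : E) ρ) :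
    pnormC p (f w) - pnormC p (f w') ≤ 4 / Real.pi / (1 - ρ ^ 2) * ‖w - w'‖ := by
  obtain ⟨c, hc, hcw⟩ := exists_dual_pnormC hp (f w)
  set F : E → ℂ := fun ζ => ∑ j, (c j * h ζ j + conj (c j) * g ζ j)
  have hF : DifferentiableOn ℂ F (ball 0 1) := by
    refine DifferentiableOn.fun_sum fun j _ => ?_
    have hj : ∀ {k : E → Fin ν → ℂ}, DifferentiableOn ℂ k (ball 0 1) →
        DifferentiableOn ℂ (fun ζ => k ζ j) (ball 0 1) := fun hk =>
      (ContinuousLinearMap.proj (R := ℂ) (φ := fun _ : Fin ν => ℂ) j).differentiable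
        |>.comp_differentiableOn hk
    exact ((hj hh).const_mul _).add ((hj hg).const_mul _)
  have hF_re : ∀ ζ ∈ ball (0 : E) 1, (F ζ).re = (∑ j, c j * f ζ j).re := by
    intro ζ hζ
    simp only [F, re_sum, hfd ζ hζ, mul_add, add_re, mul_re, conj_re, conj_im]
    ring_nf
  have hF_bound : ∀ ζ ∈ ball (0 : E) 1, |(F ζ).re| ≤ pnormC p (f ζ) := fun ζ hζ => by
    rw [hF_re ζ hζ]
    exact (abs_re_le_norm _).trans (hc _)
  have hsub : ball (0 : E) ρ ⊆ ball 0 1 := ball_subset_ball hρ.le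
  calc pnormC p (f w) - pnormC p (f w') ≤ (F w).re - (F w').re := by
        rw [hF_re w (hsub hw), hcw, ofReal_re]
        linarith [le_abs_self (F w').re, hF_bound w' (hsub hw')]
    _ = (F w - F w').re := (sub_re _ _).symm
    _ ≤ ‖F w - F w'‖ := re_le_norm _
    _ ≤ 4 / Real.pi / (1 - ρ ^ 2) * ‖w - w'‖ :=
        norm_sub_le_of_abs_re_lt_one hF (fun ζ hζ => (hF_bound ζ hζ).trans_lt (hmap ζ hζ)) hρ hw hw'

end Pluriharmonic

theorem limsup_abs_sub_div_norm_le {E : Type*} [NormedAddCommGroup E] {φ : E → ℝ} {z : E}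
    [(𝓝[≠] z).NeBot] {K : ℝ} (h : ∀ᶠ w in 𝓝 z, |φ w - φ z| ≤ K * ‖w - z‖) :
    limsup (fun w => |φ w - φ z| / ‖w - z‖) (𝓝[≠] z) ≤ K := by
  refine limsup_le_of_le (isCoboundedUnder_le_of_le _ fun w => by positivity) ?_
  filter_upwards [nhdsWithin_le_nhds h, self_mem_nhdsWithin] with w hw hwz
  rwa [div_le_iff₀ (norm_pos_iff.2 (sub_ne_zero.2 hwz))]

theorem stmt1_general (n ν : ℕ) (hn : 1 ≤ n) (p : ℝ) (hp : 1 < p)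
    (f h g : EuclideanSpace ℂ (Fin n) → (Fin ν → ℂ))
    (hh : DifferentiableOn ℂ h (Metric.ball 0 1))
    (hg : DifferentiableOn ℂ g (Metric.ball 0 1))
    (hfd : ∀ z ∈ Metric.ball (0 : EuclideanSpace ℂ (Fin n)) 1,
      ∀ j, f z j = h z j + (starRingEnd ℂ) (g z j))
    (hmap : ∀ z ∈ Metric.ball (0 : EuclideanSpace ℂ (Fin n)) 1, pnormC p (f z) < 1)
    (z : EuclideanSpace ℂ (Fin n)) (hz : ‖z‖ < 1) :
    gradPnormC p f z ≤ (4 / Real.pi) * (1 / (1 - ‖z‖ ^ 2)) := by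
  have : Nontrivial (EuclideanSpace ℂ (Fin n)) :=
    Module.nontrivial_of_finrank_pos (R := ℂ) (by simp; omega)
  have hbound : ∀ ρ ∈ Ioo ‖z‖ 1, gradPnormC p f z ≤ 4 / Real.pi / (1 - ρ ^ 2) := by
    rintro ρ ⟨hzρ, hρ⟩
    have hzmem : z ∈ ball 0 ρ := mem_ball_zero_iff.2 hzρ
    refine limsup_abs_sub_div_norm_le ?_
    filter_upwards [isOpen_ball.mem_nhds hzmem] with w hw
    refine abs_sub_le_iff.2 ⟨?_, ?_⟩
    · exact pnormC_sub_le_of_pluriharmonic hp.le hh hg hfd hmap hρ hw hzmem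
    · rw [norm_sub_rev]
      exact pnormC_sub_le_of_pluriharmonic hp.le hh hg hfd hmap hρ hzmem hw
  have hz_sq : 1 - ‖z‖ ^ 2 ≠ 0 := by nlinarith [norm_nonneg z]
  have hlim : Tendsto (fun ρ : ℝ => 4 / Real.pi / (1 - ρ ^ 2)) (𝓝[>] ‖z‖)
      (𝓝 (4 / Real.pi / (1 - ‖z‖ ^ 2))) :=
    (continuousAt_const.div (continuousAt_const.sub (continuousAt_id.pow 2)) hz_sq).tendsto
      |>.mono_left nhdsWithin_le_nhds
  calc gradPnormC p f z ≤ 4 / Real.pi / (1 - ‖z‖ ^ 2) :=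
        ge_of_tendsto hlim (eventually_of_mem (Ioo_mem_nhdsGT hz) hbound)
    _ = 4 / Real.pi * (1 / (1 - ‖z‖ ^ 2)) := by ring

theorem stmt1 (n ν : ℕ) (hn : 1 ≤ n) (hν : 1 ≤ ν) (p : ℝ) (hp : 1 < p)
    (f h g : EuclideanSpace ℂ (Fin n) → (Fin ν → ℂ))
    (hh : DifferentiableOn ℂ h (Metric.ball 0 1))
    (hg : DifferentiableOn ℂ g (Metric.ball 0 1))
    (hg0 : g 0 = 0)
    (hfd : ∀ z ∈ Metric.ball (0 : EuclideanSpace ℂ (Fin n)) 1,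
      ∀ j, f z j = h z j + (starRingEnd ℂ) (g z j))
    (hmap : ∀ z ∈ Metric.ball (0 : EuclideanSpace ℂ (Fin n)) 1, pnormC p (f z) < 1)
    (z : EuclideanSpace ℂ (Fin n)) (hz : ‖z‖ < 1) :
    gradPnormC p f z ≤ (4 / Real.pi) * (1 / (1 - ‖z‖ ^ 2)) :=
  stmt1_general n ν hn p hp f h g hh hg hfd hmap z hz
end

section
/- Let p ∈ [1,∞] and let f(z) = Σ_α a_α z^α + Σ_α conj(b_α) conj(z)^α be a pluriharmonic function on 𝔹_{ℓ_pⁿ} with sup_{z ∈ 𝔹_{ℓ_pⁿ}} Re(f(z)) ≤ 1. Then for every integer k ≥ 1, sup_{z ∈ 𝔹_{ℓ_pⁿ}} | Σ_{|α|=k} (a_α + b_α) z^α | ≤ 2 (1 − Re(f(0))). -/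
/-!
Along the complex line through `z`, the function `φ w = h (w • z) + g (w • z)` is holomorphic on a
disc of radius larger than `1`; its Taylor coefficients are the homogeneous parts
`∑_{|β| = m} (a_β + b_β) z^β`, and `Re φ w = Re f (w • z) ≤ 1` because conjugating `g` does not
change real parts. What remains is Carathéodory's coefficient inequality on the unit circle: for
`k ≥ 1` the `k`-th coefficient is the circle average of `w⁻¹ ^ k * (φ + conj φ - 2)` (the conjugate
term averages to zero since `w ^ k * φ w` vanishes at the centre), this integrand has modulus
`2 * (1 - Re φ)`, and the mean value property turns its average into `2 * (1 - Re φ 0)`.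
-/

open scoped BigOperators ENNReal

open scoped Classical in
/-- The `p`-norm on `ℂ^n` for `p ∈ [1,∞]` (`ℝ≥0∞`-valued exponent):
the sup norm if `p = ∞`, and `(∑ ‖z j‖^p)^(1/p)` otherwise. -/
noncomputable def pnormE {n : ℕ} (p : ℝ≥0∞) (z : Fin n → ℂ) : ℝ :=
  if p = ∞ then ⨆ j, ‖z j‖ else (∑ j, ‖z j‖ ^ p.toReal) ^ (1 / p.toReal)

open Complex ComplexConjugate Metric Real

theorem norm_circleAverage_le {E : Type*} [NormedAddCommGroup E] [NormedSpace ℝ E]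
    (f : ℂ → E) (c : ℂ) (R : ℝ) :
    ‖circleAverage f c R‖ ≤ circleAverage (fun z => ‖f z‖) c R := by
  rw [circleAverage_def, circleAverage_def, norm_smul, Real.norm_of_nonneg (by positivity),
    smul_eq_mul]
  gcongr
  exact intervalIntegral.norm_integral_le_integral_norm (by positivity)

section CircleAverage

variable {φ : ℂ → ℂ} {R : ℝ} {k : ℕ}

theorem circleAverage_pow_mul_eq_zero (hφ : DifferentiableOn ℂ φ (closedBall 0 R)) (hR : 0 ≤ R)
    (hk : k ≠ 0) : circleAverage (fun z => z ^ k * φ z) 0 R = 0 := by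
  have hd : DiffContOnCl ℂ (fun z => z ^ k * φ z) (ball 0 |R|) := by
    rw [abs_of_nonneg hR]
    exact ((differentiable_pow k).differentiableOn.mul hφ).diffContOnCl_ball subset_rfl
  simpa [zero_pow hk] using hd.circleAverage

theorem circleAverage_inv_pow_mul_conj_eq_zero (hφ : DifferentiableOn ℂ φ (closedBall 0 R))
    (hR : 0 < R) (hk : k ≠ 0) : circleAverage (fun z => z⁻¹ ^ k * conj (φ z)) 0 R = 0 := by
  have hint : CircleIntegrable (fun z => z ^ k * φ z) 0 R :=
    (((differentiable_pow k).differentiableOn.mul hφ).continuousOn.mono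
      sphere_subset_closedBall).circleIntegrable hR.le
  have hsphere : Set.EqOn (fun z => z⁻¹ ^ k * conj (φ z))
      (fun z => ((R ^ 2)⁻¹ ^ k : ℝ) • conj (z ^ k * φ z)) (sphere 0 |R|) := by
    intro z hz
    rw [mem_sphere_zero_iff_norm, abs_of_pos hR] at hz
    simp only [inv_def, normSq_eq_norm_sq, hz, map_mul, map_pow, real_smul]
    push_cast
    ring
  rw [circleAverage_congr_sphere hsphere, circleAverage_fun_smul]
  have hconj := (conjCLE : ℂ →L[ℝ] ℂ).circleAverage_comp_comm hint
  simp only [Function.comp_def, ContinuousLinearEquiv.coe_coe, conjCLE_apply] at hconj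
  rw [hconj, circleAverage_pow_mul_eq_zero hφ hR.le hk, map_zero, smul_zero]

theorem HasFPowerSeriesOnBall.differentiableOn_closedBall {p : FormalMultilinearSeries ℂ ℂ ℂ}
    {r : ℝ≥0∞} (hφ : HasFPowerSeriesOnBall φ p 0 r) (hRr : ENNReal.ofReal R < r) :
    DifferentiableOn ℂ φ (closedBall 0 R) :=
  hφ.differentiableOn.mono fun w hw => (edist_dist w 0 ▸ ENNReal.ofReal_le_ofReal hw).trans_lt hRr

theorem HasFPowerSeriesOnBall.coeff_eq_circleAverage {c : ℕ → ℂ} {r : ℝ≥0∞}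
    (hφ : HasFPowerSeriesOnBall φ (FormalMultilinearSeries.ofScalars ℂ c) 0 r)
    (hR : 0 < R) (hRr : ENNReal.ofReal R < r) (k : ℕ) :
    c k = circleAverage (fun z => z⁻¹ ^ k * φ z) 0 R := by
  have hd := hφ.differentiableOn_closedBall hRr
  lift R to NNReal using hR.le
  have hseries := hφ.hasFPowerSeriesAt.eq_formalMultilinearSeries
    (hd.hasFPowerSeriesOnBall (mod_cast hR)).hasFPowerSeriesAt
  have := congr($hseries k fun _ => 1)
  rw [FormalMultilinearSeries.ofScalars_apply_eq, cauchyPowerSeries_apply] at this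
  rw [circleAverage_eq_circleIntegral (mod_cast hR.ne')]
  simpa [mul_left_comm] using this

theorem HasFPowerSeriesOnBall.coeff_eq_circleAverage_inv_pow_mul_re {c : ℕ → ℂ} {r : ℝ≥0∞}
    (hφ : HasFPowerSeriesOnBall φ (FormalMultilinearSeries.ofScalars ℂ c) 0 r)
    (hR : 0 < R) (hRr : ENNReal.ofReal R < r) (M : ℝ) (hk : k ≠ 0) :
    c k = circleAverage (fun z => z⁻¹ ^ k * ((2 * ((φ z).re - M) : ℝ) : ℂ)) 0 R := by
  have hd := hφ.differentiableOn_closedBall hRr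
  have hcont : ContinuousOn φ (sphere 0 R) := hd.continuousOn.mono sphere_subset_closedBall
  have hinvpow : ContinuousOn (fun z : ℂ => z⁻¹ ^ k) (sphere 0 R) :=
    (continuousOn_inv₀.mono fun z hz => ne_of_mem_sphere hz hR.ne').pow k
  have hreal : ∀ z, z⁻¹ ^ k * ((2 * ((φ z).re - M) : ℝ) : ℂ) =
      z⁻¹ ^ k * φ z + z⁻¹ ^ k * conj (φ z - ((2 * M : ℝ) : ℂ)) := by
    intro z
    rw [← mul_add, map_sub, conj_ofReal, add_sub_assoc', add_conj]
    push_cast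
    ring
  simp_rw [hreal]
  rw [circleAverage_fun_add, circleAverage_inv_pow_mul_conj_eq_zero (hd.sub_const _) hR hk,
    add_zero, hφ.coeff_eq_circleAverage hR hRr]
  · exact (hinvpow.mul hcont).circleIntegrable hR.le
  · exact (hinvpow.mul (continuous_conj.comp_continuousOn
      (hcont.sub continuousOn_const))).circleIntegrable hR.le

theorem HasFPowerSeriesOnBall.norm_coeff_mul_pow_le_of_re_le {c : ℕ → ℂ} {r : ℝ≥0∞} {M : ℝ}
    (hφ : HasFPowerSeriesOnBall φ (FormalMultilinearSeries.ofScalars ℂ c) 0 r)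
    (hR : 0 < R) (hRr : ENNReal.ofReal R < r) (hre : ∀ w ∈ sphere (0 : ℂ) R, (φ w).re ≤ M)
    (hk : k ≠ 0) : ‖c k‖ * R ^ k ≤ 2 * (M - (φ 0).re) := by
  have hd := hφ.differentiableOn_closedBall hRr
  have hcont : ContinuousOn φ (sphere 0 R) := hd.continuousOn.mono sphere_subset_closedBall
  have hcoeff := hφ.coeff_eq_circleAverage_inv_pow_mul_re hR hRr M hk
  have hnorm : Set.EqOn (fun z => ‖(R : ℂ) ^ k • (z⁻¹ ^ k * ((2 * ((φ z).re - M) : ℝ) : ℂ))‖)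
      (fun z => (2 * ((M : ℂ) - φ z)).re) (sphere 0 |R|) := by
    intro z hz
    rw [abs_of_pos hR] at hz
    have hz' : ‖z‖ = R := mem_sphere_zero_iff_norm.mp hz
    simp only [smul_eq_mul, norm_mul, norm_pow, norm_inv, norm_real, Real.norm_eq_abs, hz',
      abs_of_pos hR, ← mul_assoc, ← mul_pow, mul_inv_cancel₀ hR.ne', one_pow, one_mul]
    simp [abs_of_nonpos (sub_nonpos.mpr (hre z hz))]
  have hmean : circleAverage (fun z => 2 * ((M : ℂ) - φ z)) 0 R = 2 * ((M : ℂ) - φ 0) := by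
    refine DiffContOnCl.circleAverage ?_
    rw [abs_of_pos hR]
    exact ((hd.const_sub _).const_mul _).diffContOnCl_ball subset_rfl
  have hint : CircleIntegrable (fun z => 2 * ((M : ℂ) - φ z)) 0 R :=
    (continuousOn_const.mul (continuousOn_const.sub hcont)).circleIntegrable hR.le
  have hre_mean := reCLM.circleAverage_comp_comm hint
  simp only [Function.comp_def, reCLM_apply, hmean] at hre_mean
  calc ‖c k‖ * R ^ k
      = ‖circleAverage (fun z => (R : ℂ) ^ k • (z⁻¹ ^ k * ((2 * ((φ z).re - M) : ℝ) : ℂ))) 0 R‖ :=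
        by rw [circleAverage_fun_smul, ← hcoeff, norm_smul, norm_pow, norm_real,
            Real.norm_of_nonneg hR.le, mul_comm]
    _ ≤ circleAverage (fun z => (2 * ((M : ℂ) - φ z)).re) 0 R :=
        (norm_circleAverage_le _ _ _).trans_eq (circleAverage_congr_sphere hnorm)
    _ = 2 * (M - (φ 0).re) := by
        rw [hre_mean]
        simp

end CircleAverage

theorem hasFPowerSeriesOnBall_ofScalars_of_hasSum {φ : ℂ → ℂ} {c : ℕ → ℂ} {t : ℝ} (ht : 0 < t)
    (hφ : ∀ w : ℂ, ‖w‖ < t → HasSum (fun m => c m * w ^ m) (φ w)) :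
    HasFPowerSeriesOnBall φ (FormalMultilinearSeries.ofScalars ℂ c) 0 (ENNReal.ofReal t) where
  r_le := ENNReal.le_of_forall_nnreal_lt fun r hr => by
    have hrt : ‖((r : ℝ) : ℂ)‖ < t := by
      rw [Complex.norm_of_nonneg r.coe_nonneg]
      exact (ENNReal.lt_ofReal_iff_toReal_lt ENNReal.coe_ne_top).mp hr
    refine FormalMultilinearSeries.le_radius_of_tendsto _ (l := 0) ?_
    simpa [FormalMultilinearSeries.ofScalars_norm] using
      (hφ _ hrt).summable.tendsto_atTop_zero.norm
  r_pos := ENNReal.ofReal_pos.mpr ht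
  hasSum {w} hw := by
    rw [eball_ofReal, mem_ball_zero_iff] at hw
    simpa [FormalMultilinearSeries.ofScalars_apply_eq, mul_comm] using hφ w hw

theorem exists_one_lt_mul_lt_one {s : ℝ} (hs₀ : 0 ≤ s) (hs₁ : s < 1) :
    ∃ t, 1 < t ∧ t * s < 1 :=
  ⟨2 / (1 + s), by rw [lt_div_iff₀ (by positivity)]; linarith,
    by rw [div_mul_eq_mul_div, div_lt_one (by positivity)]; linarith⟩

theorem pnormE_nonneg {n : ℕ} (p : ℝ≥0∞) (z : Fin n → ℂ) : 0 ≤ pnormE p z := by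
  unfold pnormE
  split_ifs
  · exact Real.iSup_nonneg fun j => norm_nonneg _
  · exact Real.rpow_nonneg (Finset.sum_nonneg fun j _ => Real.rpow_nonneg (norm_nonneg _) _) _

theorem pnormE_smul {n : ℕ} {p : ℝ≥0∞} (hp : p ≠ 0) (l : ℂ) (z : Fin n → ℂ) :
    pnormE p (l • z) = ‖l‖ * pnormE p z := by
  unfold pnormE
  split_ifs with hinf
  · simp only [Pi.smul_apply, smul_eq_mul, norm_mul, Real.mul_iSup_of_nonneg (norm_nonneg l)]
  · have ht : 0 < p.toReal := ENNReal.toReal_pos hp hinf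
    simp only [Pi.smul_apply, smul_eq_mul, norm_mul, Real.mul_rpow (norm_nonneg _) (norm_nonneg _),
      ← Finset.mul_sum]
    rw [Real.mul_rpow (by positivity) (by positivity), ← Real.rpow_mul (norm_nonneg l),
      mul_one_div_cancel ht.ne', Real.rpow_one]

noncomputable def homogeneousPart {ι : Type*} [Fintype ι] (a : (ι → ℕ) → ℂ) (z : ι → ℂ)
    (m : ℕ) : ℂ :=
  ∑' β : {β : ι → ℕ // ∑ i, β i = m}, a β.1 * ∏ i, z i ^ β.1 i

theorem hasSum_homogeneousPart_mul_pow {ι : Type*} [Fintype ι] {a : (ι → ℕ) → ℂ} {z : ι → ℂ}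
    {l F : ℂ} (hz : Summable fun α : ι → ℕ => a α * ∏ i, z i ^ α i)
    (hl : HasSum (fun α : ι → ℕ => a α * ∏ i, (l • z) i ^ α i) F) :
    HasSum (fun m => homogeneousPart a z m * l ^ m) F := by
  have hterm : ∀ α : ι → ℕ,
      a α * ∏ i, (l • z) i ^ α i = l ^ (∑ i, α i) * (a α * ∏ i, z i ^ α i) := by
    intro α
    simp only [Pi.smul_apply, smul_eq_mul, mul_pow, Finset.prod_mul_distrib,
      Finset.prod_pow_eq_pow_sum]
    ring
  simp only [hterm] at hl
  refine ((Equiv.sigmaFiberEquiv fun α : ι → ℕ => ∑ i, α i).hasSum_iff.mpr hl).sigma fun m => ?_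
  have hfiber : HasSum (fun β : {α : ι → ℕ // ∑ i, α i = m} => l ^ m * (a β.1 * ∏ i, z i ^ β.1 i))
      (l ^ m * homogeneousPart a z m) := (hz.subtype _).hasSum.mul_left _
  rw [mul_comm]
  convert hfiber using 2 with β
  simp only [Function.comp_apply, Equiv.sigmaFiberEquiv_apply, β.2]

theorem stmt7_general (n : ℕ) (p : ℝ≥0∞) (hp : 1 ≤ p)
    (f h g : (Fin n → ℂ) → ℂ) (a b : (Fin n → ℕ) → ℂ)
    (hfd : ∀ z : Fin n → ℂ, pnormE p z < 1 → f z = h z + (starRingEnd ℂ) (g z))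
    (hha : ∀ z : Fin n → ℂ, pnormE p z < 1 →
      HasSum (fun α : Fin n → ℕ => a α * ∏ k, z k ^ α k) (h z))
    (hgb : ∀ z : Fin n → ℂ, pnormE p z < 1 →
      HasSum (fun α : Fin n → ℕ => b α * ∏ k, z k ^ α k) (g z))
    (hre : ∀ z : Fin n → ℂ, pnormE p z < 1 → (f z).re ≤ 1)
    (k : ℕ) (hk : 1 ≤ k) (z : Fin n → ℂ) (hz : pnormE p z < 1) :
    ‖∑' β : {β : Fin n → ℕ // ∑ i, β i = k}, (a β.1 + b β.1) * ∏ i, z i ^ β.1 i‖ ≤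
      2 * (1 - (f 0).re) := by
  have hslice : ∀ w : ℂ, ‖w‖ * pnormE p z < 1 → pnormE p (w • z) < 1 := fun w hw => by
    rwa [pnormE_smul (zero_lt_one.trans_le hp).ne']
  have hsum : ∀ w, pnormE p w < 1 →
      HasSum (fun α => (a + b) α * ∏ i, w i ^ α i) (h w + g w) := fun w hw => by
    simpa only [Pi.add_apply, add_mul] using (hha w hw).add (hgb w hw)
  have hre_slice : ∀ w : ℂ, pnormE p (w • z) < 1 →
      (h (w • z) + g (w • z)).re = (f (w • z)).re := fun w hw => by
    simp [hfd _ hw]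
  obtain ⟨t, ht, hts⟩ := exists_one_lt_mul_lt_one (pnormE_nonneg p z) hz
  have hseries : HasFPowerSeriesOnBall (fun w : ℂ => h (w • z) + g (w • z))
      (FormalMultilinearSeries.ofScalars ℂ (homogeneousPart (a + b) z)) 0 (ENNReal.ofReal t) :=
    hasFPowerSeriesOnBall_ofScalars_of_hasSum (zero_lt_one.trans ht) fun w hw =>
      hasSum_homogeneousPart_mul_pow (hsum z hz).summable (hsum _ (hslice w
        ((mul_le_mul_of_nonneg_right hw.le (pnormE_nonneg p z)).trans_lt hts)))
  have hbound := hseries.norm_coeff_mul_pow_le_of_re_le one_pos (by simpa using ht)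
    (fun w hw => by
      have hwz := hslice w (by rwa [mem_sphere_zero_iff_norm.mp hw, one_mul])
      exact (hre_slice w hwz).trans_le (hre _ hwz))
    (Nat.one_le_iff_ne_zero.mp hk)
  rw [hre_slice 0 (by simpa using hslice 0 (by simp)), zero_smul, one_pow, mul_one] at hbound
  exact hbound

theorem stmt7 (n : ℕ) (hn : 1 ≤ n) (p : ℝ≥0∞) (hp : 1 ≤ p)
    (f h g : (Fin n → ℂ) → ℂ) (a b : (Fin n → ℕ) → ℂ) (hb0 : b 0 = 0)
    (hh : DifferentiableOn ℂ h {z | pnormE p z < 1})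
    (hg : DifferentiableOn ℂ g {z | pnormE p z < 1})
    (hg0 : g 0 = 0)
    (hfd : ∀ z : Fin n → ℂ, pnormE p z < 1 → f z = h z + (starRingEnd ℂ) (g z))
    (hha : ∀ z : Fin n → ℂ, pnormE p z < 1 →
      HasSum (fun α : Fin n → ℕ => a α * ∏ k, z k ^ α k) (h z))
    (hgb : ∀ z : Fin n → ℂ, pnormE p z < 1 →
      HasSum (fun α : Fin n → ℕ => b α * ∏ k, z k ^ α k) (g z))
    (hre : ∀ z : Fin n → ℂ, pnormE p z < 1 → (f z).re ≤ 1)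
    (k : ℕ) (hk : 1 ≤ k) (z : Fin n → ℂ) (hz : pnormE p z < 1) :
    ‖∑' β : {β : Fin n → ℕ // ∑ i, β i = k}, (a β.1 + b β.1) * ∏ i, z i ^ β.1 i‖ ≤
      2 * (1 - (f 0).re) :=
  stmt7_general n p hp f h g a b hfd hha hgb hre k hk z hz
end

section
/- Let p ∈ [1,∞] and let f(z) = Σ_α a_α z^α + Σ_α conj(b_α) conj(z)^α be a pluriharmonic function on 𝔹_{ℓ_pⁿ} with sup_{z ∈ 𝔹_{ℓ_pⁿ}} Re(f(z)) ≤ 1. Then for every multi-index α with |α| ≥ 1, |a_α + b_α| ≤ 2 ( |α|^{|α|} / α^α )^{1/p} (1 − Re(f(0))) (with the convention that the exponent 1/p equals 0 when p = ∞). -/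
open scoped BigOperators ENNReal

/-
The one-variable case is Carathéodory's coefficient inequality: if `v = ∑ D j w ^ j` has real part
at most `1` on the unit disc, then integrating the nonnegative function `1 - Re v (ρ e^{iθ})`
against `e^{-iNθ}` gives `π ‖D N‖ ρ ^ N ≤ 2π (1 - Re D 0)`.

The general case reduces to it along the curve `z k = t k * w ^ N k`. Here `t k = (α k / |α|)^{1/p}`
is the point of the closed unit `ℓ^p`-ball at which `|z ^ α|` is largest, with
`t ^ α = (α ^ α / |α| ^ |α|)^{1/p}`, and the exponents `N k` are chosen so that `z ^ α` is the only
monomial contributing to the coefficient of `w ^ (∑ α k * N k)`. The coefficients that matter are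
those of `h + g`, since `Re f = Re (h + g)`.
-/

section OneVariable

open MeasureTheory Complex

theorem integral_exp_int_mul_I (k : ℤ) :
    ∫ θ in (0 : ℝ)..2 * Real.pi, exp (k * θ * I) = if k = 0 then 2 * (Real.pi : ℂ) else 0 := by
  split_ifs with hk
  · simp [hk]
  have hkI : (k : ℂ) * I ≠ 0 := mul_ne_zero (Int.cast_ne_zero.mpr hk) I_ne_zero
  have hperiod : exp (k * I * (2 * Real.pi : ℝ)) = 1 := by
    rw [← exp_int_mul_two_pi_mul_I k]; push_cast; ring_nf
  simp_rw [mul_right_comm _ _ I]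
  rw [integral_exp_mul_complex hkI, hperiod]
  simp

theorem norm_exp_int_mul_I (k : ℤ) (θ : ℝ) : ‖exp (k * θ * I)‖ = 1 := by
  rw [norm_exp]; simp

variable {u : ℕ → ℂ}

theorem hasSum_integral_tsum_mul_exp (hu : Summable fun j => ‖u j‖) (k : ℤ) :
    HasSum (fun j : ℕ => if (j : ℤ) + k = 0 then 2 * Real.pi * u j else 0)
      (∫ θ in (0 : ℝ)..2 * Real.pi, (∑' j, u j * exp (j * θ * I)) * exp (k * θ * I)) := by
  have hterm (j : ℕ) (θ : ℝ) :
      u j * exp (j * θ * I) * exp (k * θ * I) = u j * exp (((j + k : ℤ) : ℂ) * θ * I) := by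
    rw [mul_assoc, ← exp_add]; push_cast; ring_nf
  have hsummable (θ : ℝ) : Summable fun j : ℕ => u j * exp (j * θ * I) :=
    Summable.of_norm (by simpa [norm_mul, norm_exp] using hu)
  have hsum := intervalIntegral.hasSum_integral_of_dominated_convergence
    (a := 0) (b := 2 * Real.pi) (μ := volume)
    (F := fun j θ => u j * exp (j * θ * I) * exp (k * θ * I)) (fun j _ => ‖u j‖)
    (fun j => by fun_prop) (fun j => ae_of_all _ fun θ _ => by
      rw [hterm, norm_mul, norm_exp_int_mul_I, mul_one])
    (ae_of_all _ fun _ _ => hu) intervalIntegrable_const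
    (ae_of_all _ fun θ _ => (hsummable θ).hasSum.mul_right _)
  have hval (j : ℕ) : ∫ θ in (0 : ℝ)..2 * Real.pi, u j * exp (j * θ * I) * exp (k * θ * I)
      = if (j : ℤ) + k = 0 then 2 * Real.pi * u j else 0 := by
    simp_rw [hterm, intervalIntegral.integral_const_mul, integral_exp_int_mul_I]
    split_ifs <;> ring
  simpa only [hval] using hsum

theorem integral_tsum_mul_exp_neg (hu : Summable fun j => ‖u j‖) (N : ℕ) :
    ∫ θ in (0 : ℝ)..2 * Real.pi, (∑' j, u j * exp (j * θ * I)) * exp ((-N : ℤ) * θ * I)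
      = 2 * Real.pi * u N := by
  refine (hasSum_integral_tsum_mul_exp hu _).unique ?_
  convert hasSum_ite_eq N (2 * Real.pi * u N) using 2 with j
  rcases eq_or_ne j N with rfl | hj
  · simp
  · simp only [hj, if_false, ite_eq_right_iff]
    omega

theorem integral_tsum_mul_exp_of_ne_zero (hu : Summable fun j => ‖u j‖) {N : ℕ} (hN : N ≠ 0) :
    ∫ θ in (0 : ℝ)..2 * Real.pi, (∑' j, u j * exp (j * θ * I)) * exp (N * θ * I) = 0 := by
  refine (hasSum_integral_tsum_mul_exp hu N).unique ?_
  convert hasSum_zero with j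
  simp only [ite_eq_right_iff]
  omega

theorem integral_tsum_mul_exp_zero (hu : Summable fun j => ‖u j‖) :
    ∫ θ in (0 : ℝ)..2 * Real.pi, (∑' j, u j * exp (j * θ * I)) = 2 * Real.pi * u 0 := by
  simpa using integral_tsum_mul_exp_neg hu 0

theorem norm_coeff_le_of_re_tsum_le_one (hu : Summable fun j => ‖u j‖)
    (hre : ∀ θ : ℝ, (∑' j, u j * exp (j * θ * I)).re ≤ 1) {N : ℕ} (hN : N ≠ 0) :
    ‖u N‖ ≤ 2 * (1 - (u 0).re) := by
  set V : ℝ → ℂ := fun θ => ∑' j, u j * exp (j * θ * I)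
  have hVcont : Continuous V := by
    refine continuous_tsum (fun j => by fun_prop) hu fun j θ => ?_
    simp [norm_exp]
  have hcont {F : ℝ → ℂ} (hF : Continuous F) : IntervalIntegrable F volume 0 (2 * Real.pi) :=
    hF.intervalIntegrable _ _
  have hconj (θ : ℝ) : (starRingEnd ℂ) (exp (N * θ * I)) = exp ((-N : ℤ) * θ * I) := by
    rw [← exp_conj]; simp
  -- `1 - Re V` is a nonnegative weight whose `N`-th Fourier coefficient is `-u N / 2`.
  have hsplit (θ : ℝ) : ((1 - (V θ).re : ℝ) : ℂ) * exp ((-N : ℤ) * θ * I)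
      = exp ((-N : ℤ) * θ * I) - 2⁻¹ * (V θ * exp ((-N : ℤ) * θ * I))
        - 2⁻¹ * (starRingEnd ℂ) (V θ * exp (N * θ * I)) := by
    rw [map_mul, hconj, ofReal_sub, ofReal_one, re_eq_add_conj]
    ring
  have hI : ∫ θ in (0 : ℝ)..2 * Real.pi, ((1 - (V θ).re : ℝ) : ℂ) * exp ((-N : ℤ) * θ * I)
      = -(Real.pi * u N) := by
    simp_rw [hsplit]
    rw [intervalIntegral.integral_sub (.sub (hcont (by fun_prop)) (hcont (by fun_prop)))
        (hcont (by fun_prop)), intervalIntegral.integral_sub (hcont (by fun_prop))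
        (hcont (by fun_prop)), intervalIntegral.integral_const_mul,
      intervalIntegral.integral_const_mul, intervalIntegral.intervalIntegral_conj,
      integral_exp_int_mul_I, integral_tsum_mul_exp_neg hu, integral_tsum_mul_exp_of_ne_zero hu hN]
    simp [hN]
    ring
  have hbound : ‖∫ θ in (0 : ℝ)..2 * Real.pi, ((1 - (V θ).re : ℝ) : ℂ) * exp ((-N : ℤ) * θ * I)‖
      ≤ 2 * Real.pi * (1 - (u 0).re) := calc
    _ ≤ ∫ θ in (0 : ℝ)..2 * Real.pi, ‖((1 - (V θ).re : ℝ) : ℂ) * exp ((-N : ℤ) * θ * I)‖ :=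
      intervalIntegral.norm_integral_le_integral_norm (by positivity)
    _ = ∫ θ in (0 : ℝ)..2 * Real.pi, (1 - (V θ).re) := by
      refine intervalIntegral.integral_congr fun θ _ => ?_
      rw [norm_mul, norm_exp_int_mul_I, mul_one, norm_real,
        Real.norm_of_nonneg (sub_nonneg.2 (hre θ))]
    _ = 2 * Real.pi * (1 - (u 0).re) := by
      rw [intervalIntegral.integral_sub intervalIntegrable_const
          (Continuous.intervalIntegrable (by fun_prop) _ _),
        show ∫ θ in (0 : ℝ)..2 * Real.pi, (V θ).re = (∫ θ in (0 : ℝ)..2 * Real.pi, V θ).re from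
          intervalIntegral.intervalIntegral_re (hcont hVcont), integral_tsum_mul_exp_zero hu]
      simp
      ring
  rw [hI, norm_neg, norm_mul, norm_real, Real.norm_of_nonneg Real.pi_pos.le] at hbound
  nlinarith [Real.pi_pos]

open Filter Topology in
theorem norm_coeff_le_of_re_le_one {D : ℕ → ℂ} {v : ℂ → ℂ}
    (hv : ∀ w : ℂ, ‖w‖ < 1 → HasSum (fun j => D j * w ^ j) (v w))
    (hre : ∀ w : ℂ, ‖w‖ < 1 → (v w).re ≤ 1) {N : ℕ} (hN : N ≠ 0) :
    ‖D N‖ ≤ 2 * (1 - (D 0).re) := by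
  have hradius {ρ : ℝ} (hρ : ρ ∈ Set.Ioo 0 1) : ‖D N‖ * ρ ^ N ≤ 2 * (1 - (D 0).re) := by
    have hw (θ : ℝ) : ‖(ρ : ℂ) * exp (θ * I)‖ < 1 := by
      simpa [abs_of_pos hρ.1] using hρ.2
    have hu : Summable fun j => ‖D j * (ρ : ℂ) ^ j‖ :=
      summable_norm_iff.mpr (hv ρ (by simpa using hw 0)).summable
    have hterm (j : ℕ) (θ : ℝ) :
        D j * (ρ : ℂ) ^ j * exp (j * θ * I) = D j * ((ρ : ℂ) * exp (θ * I)) ^ j := by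
      rw [mul_pow, ← exp_nat_mul]; ring_nf
    have hcirc := norm_coeff_le_of_re_tsum_le_one hu (fun θ => by
      simp_rw [hterm, (hv _ (hw θ)).tsum_eq]; exact hre _ (hw θ)) hN
    simpa [norm_mul, abs_of_pos hρ.1] using hcirc
  have hlim : Tendsto (fun ρ : ℝ => ‖D N‖ * ρ ^ N) (𝓝[<] 1) (𝓝 ‖D N‖) := by
    simpa using ((continuous_pow N).const_mul ‖D N‖).continuousWithinAt.tendsto (x := 1)
  exact le_of_tendsto hlim (eventually_of_mem (Ioo_mem_nhdsLT zero_lt_one) fun ρ hρ => hradius hρ)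

end OneVariable

section PNorm

variable {n : ℕ} {p : ℝ≥0∞}

theorem pnormE_mono {z y : Fin n → ℂ} (h : ∀ k, ‖z k‖ ≤ ‖y k‖) : pnormE p z ≤ pnormE p y := by
  unfold pnormE
  split_ifs
  · exact ciSup_mono (Set.finite_range _).bddAbove h
  · gcongr with k
    exact h k

theorem pnormE_ofReal_mul (hp : p ≠ 0) {s : ℝ} (hs : 0 ≤ s) (y : Fin n → ℂ) :
    pnormE p (fun k => (s : ℂ) * y k) = s * pnormE p y := by
  unfold pnormE
  split_ifs with hinf
  · simp_rw [norm_mul, Complex.norm_real, Real.norm_of_nonneg hs, Real.mul_iSup_of_nonneg hs]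
  · have hpt : 0 < p.toReal := ENNReal.toReal_pos hp hinf
    simp_rw [norm_mul, Complex.norm_real, Real.norm_of_nonneg hs,
      Real.mul_rpow hs (norm_nonneg _), ← Finset.mul_sum]
    rw [Real.mul_rpow (by positivity) (by positivity), ← Real.rpow_mul hs,
      mul_one_div_cancel hpt.ne', Real.rpow_one]

theorem pnormE_zero (hp : p ≠ 0) : pnormE p (0 : Fin n → ℂ) = 0 := by
  have h := pnormE_ofReal_mul hp le_rfl (0 : Fin n → ℂ)
  simp only [Complex.ofReal_zero, zero_mul, Pi.zero_apply] at h
  exact h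

end PNorm

section MonomialMaximizer

variable {n : ℕ} (p : ℝ≥0∞) (α : Fin n → ℕ)

/-- For `p = ∞` the junk value `p.toReal⁻¹ = 0` makes this the all-ones vector, in line with the
convention `1 / p = 0`. -/
noncomputable def monomialMaximizer (k : Fin n) : ℝ :=
  ((α k : ℝ) / ∑ j, α j) ^ p.toReal⁻¹

theorem monomialMaximizer_nonneg (k : Fin n) : 0 ≤ monomialMaximizer p α k := by
  unfold monomialMaximizer; positivity

theorem prod_monomialMaximizer_pow :
    ∏ k, monomialMaximizer p α k ^ α k
      = ((∏ k, (α k : ℝ) ^ α k) / (∑ k, α k : ℕ) ^ (∑ k, α k)) ^ p.toReal⁻¹ := by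
  unfold monomialMaximizer
  have hx (k : Fin n) : (0 : ℝ) ≤ (α k : ℝ) / (∑ j, α j : ℕ) := by positivity
  rw [Finset.prod_congr rfl fun k _ => Real.rpow_pow_comm (hx k) _ _,
    Real.finsetProd_rpow _ _ fun k _ => pow_nonneg (hx k) _]
  simp_rw [div_pow, Finset.prod_div_distrib, Finset.prod_pow_eq_pow_sum]

variable {p α}

theorem pnormE_monomialMaximizer_le_one (hp : p ≠ 0) (hα : α ≠ 0) :
    pnormE p (fun k => (monomialMaximizer p α k : ℂ)) ≤ 1 := by
  unfold pnormE monomialMaximizer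
  split_ifs with hinf
  · exact Real.iSup_le (fun k => by simp [hinf]) zero_le_one
  have hpt : 0 < p.toReal := ENNReal.toReal_pos hp hinf
  have hm : (0 : ℝ) < ∑ j, α j := by
    obtain ⟨k, hk⟩ := Function.ne_iff.mp hα
    exact_mod_cast Finset.sum_pos' (fun j _ => Nat.zero_le _)
      ⟨k, Finset.mem_univ _, Nat.pos_of_ne_zero hk⟩
  have hterm (k : Fin n) : ‖((((α k : ℝ) / ∑ j, α j) ^ p.toReal⁻¹ : ℝ) : ℂ)‖ ^ p.toReal
      = (α k : ℝ) / ∑ j, α j := by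
    rw [Complex.norm_real, Real.norm_of_nonneg (by positivity), ← Real.rpow_mul (by positivity),
      inv_mul_cancel₀ hpt.ne', Real.rpow_one]
  rw [Finset.sum_congr rfl fun k _ => hterm k, ← Finset.sum_div, ← Nat.cast_sum, div_self hm.ne',
    Real.one_rpow]

end MonomialMaximizer

theorem eq_of_sum_mul_pow_eq {n q : ℕ} {β γ : Fin n → ℕ} (hβ : ∀ k, β k < q)
    (hγ : ∀ k, γ k < q) (h : ∑ k, β k * q ^ (k : ℕ) = ∑ k, γ k * q ^ (k : ℕ)) : β = γ := by
  by_cases hq : q ≤ 1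
  · funext k
    have := hβ k; have := hγ k; omega
  refine List.ofFn_injective (Nat.ofDigits_inj_of_len_eq (b := q) (by omega) (by simp)
    (by simpa using hβ) (by simpa using hγ) ?_)
  simpa [Nat.ofDigits_eq_sum_mapIdx, List.mapIdx_eq_ofFn, List.sum_ofFn, mul_comm] using h

theorem sum_mul_add_pow_eq_iff {n m q L : ℕ} {α β : Fin n → ℕ} (hα : ∑ k, α k = m)
    (hq : m < q) (hL : m * q ^ n < L) :
    ∑ k, β k * (L + q ^ (k : ℕ)) = ∑ k, α k * (L + q ^ (k : ℕ)) ↔ β = α := by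
  refine ⟨fun h => ?_, fun h => h ▸ rfl⟩
  have hsplit (δ : Fin n → ℕ) :
      ∑ k, δ k * (L + q ^ (k : ℕ)) = (∑ k, δ k) * L + ∑ k, δ k * q ^ (k : ℕ) := by
    simp only [mul_add, Finset.sum_add_distrib, Finset.sum_mul]
  have hdigits (δ : Fin n → ℕ) : ∑ k, δ k * q ^ (k : ℕ) ≤ (∑ k, δ k) * q ^ n := by
    rw [Finset.sum_mul]
    exact Finset.sum_le_sum fun k _ =>
      Nat.mul_le_mul_left _ (Nat.pow_le_pow_right (by omega) k.2.le)
  rw [hsplit, hsplit, hα] at h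
  have hA := hα ▸ hdigits α
  have hB := hdigits β
  -- the `L`-parts must agree, since the digit parts are too small to make up a multiple of `L`
  have hβm : ∑ k, β k = m := by
    generalize ∑ k, β k * q ^ (k : ℕ) = Sβ at h hB
    generalize ∑ k, α k * q ^ (k : ℕ) = Sα at h hA
    rcases Nat.lt_trichotomy (∑ k, β k) m with hlt | heq | hgt
    · have h1 : (∑ k, β k + 1) * L ≤ m * L := Nat.mul_le_mul_right L hlt
      have h2 : (∑ k, β k) * q ^ n ≤ m * q ^ n := Nat.mul_le_mul_right _ hlt.le
      exfalso
      linarith [add_one_mul (∑ k, β k) L]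
    · exact heq
    · have h1 : (m + 1) * L ≤ (∑ k, β k) * L := Nat.mul_le_mul_right L hgt
      exfalso
      linarith [add_one_mul m L]
  have hle (δ : Fin n → ℕ) (k : Fin n) : δ k ≤ ∑ j, δ j :=
    Finset.single_le_sum (fun j _ => Nat.zero_le (δ j)) (Finset.mem_univ k)
  refine eq_of_sum_mul_pow_eq (fun k => ?_) (fun k => ?_)
    (by rw [hβm] at h; exact Nat.add_left_cancel h)
  · have := hle β k; omega
  · have := hle α k; omega

theorem HasSum.fiberwise_mul_pow {ι : Type*} {d : ι → ℂ} {e : ι → ℕ} {w a : ℂ}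
    (h : HasSum (fun i => d i * w ^ e i) a) :
    HasSum (fun j => (∑' i : e ⁻¹' {j}, d i) * w ^ j) a := by
  have hfiber (j : ℕ) : ∑' i : e ⁻¹' {j}, d i * w ^ e i = (∑' i : e ⁻¹' {j}, d i) * w ^ j := by
    rw [← tsum_mul_right]
    exact tsum_congr fun i => by rw [Set.mem_singleton_iff.mp i.2]
  simpa only [hfiber] using h.tsum_fiberwise e

theorem tsum_preimage_singleton {ι κ M : Type*} [AddCommMonoid M] [TopologicalSpace M]
    {e : ι → κ} {i : ι} {j : κ} (h : ∀ x, e x = j ↔ x = i) (d : ι → M) :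
    ∑' x : e ⁻¹' {j}, d x = d i := by
  rw [show e ⁻¹' {j} = {i} from Set.ext h, tsum_singleton]

theorem hasSum_mul_prod_zero_pow {ι R : Type*} [Fintype ι] [CommSemiring R] [TopologicalSpace R]
    (c : (ι → ℕ) → R) : HasSum (fun β => c β * ∏ k, (0 : R) ^ β k) (c 0) := by
  have hterm (β : ι → ℕ) : c β * ∏ k, (0 : R) ^ β k = if β = 0 then c 0 else 0 := by
    by_cases hβ : β = 0
    · simp [hβ]
    · obtain ⟨k, hk⟩ := Function.ne_iff.mp hβ
      rw [if_neg hβ, Finset.prod_eq_zero (Finset.mem_univ k) (zero_pow hk), mul_zero]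
  simpa only [hterm] using hasSum_ite_eq 0 (c 0)

/-- Under `z k = t k * w ^ separatingWeight m k`, the monomial `z ^ β` becomes a multiple of
`w ^ ∑ k, β k * separatingWeight m k`, and by `sum_mul_add_pow_eq_iff` a multi-index `α` with
`∑ k, α k = m` is the only one sent to its power of `w`. -/
def separatingWeight (m : ℕ) {n : ℕ} (k : Fin n) : ℕ :=
  (m * (m + 1) ^ n + 1) + (m + 1) ^ (k : ℕ)

theorem norm_coeff_mul_prod_le {n : ℕ} {p : ℝ≥0∞} (hp : p ≠ 0) {c : (Fin n → ℕ) → ℂ}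
    {φ : (Fin n → ℂ) → ℂ}
    (hφ : ∀ z, pnormE p z < 1 → HasSum (fun β => c β * ∏ k, z k ^ β k) (φ z))
    (hre : ∀ z, pnormE p z < 1 → (φ z).re ≤ 1) {t : Fin n → ℝ} (ht0 : ∀ k, 0 ≤ t k)
    (ht : pnormE p (fun k => (t k : ℂ)) ≤ 1) {α : Fin n → ℕ} (hα : α ≠ 0) :
    ‖c α‖ * ∏ k, t k ^ α k ≤ 2 * (1 - (c 0).re) := by
  set N : Fin n → ℕ := separatingWeight (∑ k, α k)
  set e : (Fin n → ℕ) → ℕ := fun β => ∑ k, β k * N k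
  have hN (k : Fin n) : N k ≠ 0 := by simp [N, separatingWeight]
  have he0 (β : Fin n → ℕ) : e β = 0 ↔ β = 0 := by
    simp [e, hN, Finset.sum_eq_zero_iff, funext_iff]
  have heα (β : Fin n → ℕ) : e β = e α ↔ β = α :=
    sum_mul_add_pow_eq_iff rfl (lt_add_one _) (lt_add_one _)
  have hball {w : ℂ} (hw : ‖w‖ < 1) : pnormE p (fun k => (t k : ℂ) * w ^ N k) < 1 := calc
    _ ≤ pnormE p (fun k => (‖w‖ : ℂ) * t k) := pnormE_mono fun k => by
        simp only [norm_mul, norm_pow, Complex.norm_real, Real.norm_of_nonneg (ht0 k),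
          Real.norm_of_nonneg (norm_nonneg w)]
        rw [mul_comm]
        exact mul_le_mul_of_nonneg_right (pow_le_of_le_one (norm_nonneg w) hw.le (hN k)) (ht0 k)
    _ = ‖w‖ * pnormE p (fun k => (t k : ℂ)) := pnormE_ofReal_mul hp (norm_nonneg w) _
    _ ≤ ‖w‖ := mul_le_of_le_one_right (norm_nonneg w) ht
    _ < 1 := hw
  have hmonomial (w : ℂ) (β : Fin n → ℕ) :
      c β * ∏ k, ((t k : ℂ) * w ^ N k) ^ β k = (c β * ∏ k, (t k : ℂ) ^ β k) * w ^ e β := by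
    simp only [e, mul_pow, Finset.prod_mul_distrib, ← pow_mul, Finset.prod_pow_eq_pow_sum,
      mul_assoc, mul_comm (N _)]
  have hseries {w : ℂ} (hw : ‖w‖ < 1) := (by simpa only [hmonomial] using hφ _ (hball hw) :
    HasSum (fun β => (c β * ∏ k, (t k : ℂ) ^ β k) * w ^ e β) _).fiberwise_mul_pow
  have key := norm_coeff_le_of_re_le_one (fun w hw => hseries hw) (fun w hw => hre _ (hball hw))
    ((he0 α).not.mpr hα)
  rw [tsum_preimage_singleton heα (fun β => c β * ∏ k, (t k : ℂ) ^ β k),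
    tsum_preimage_singleton he0 (fun β => c β * ∏ k, (t k : ℂ) ^ β k)] at key
  simpa [norm_mul, norm_prod, abs_of_nonneg (ht0 _)] using key

theorem stmt8_general (n : ℕ) (p : ℝ≥0∞) (hp : 1 ≤ p)
    (f h g : (Fin n → ℂ) → ℂ) (a b : (Fin n → ℕ) → ℂ)
    (hfd : ∀ z : Fin n → ℂ, pnormE p z < 1 → f z = h z + (starRingEnd ℂ) (g z))
    (hha : ∀ z : Fin n → ℂ, pnormE p z < 1 →
      HasSum (fun α : Fin n → ℕ => a α * ∏ k, z k ^ α k) (h z))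
    (hgb : ∀ z : Fin n → ℂ, pnormE p z < 1 →
      HasSum (fun α : Fin n → ℕ => b α * ∏ k, z k ^ α k) (g z))
    (hre : ∀ z : Fin n → ℂ, pnormE p z < 1 → (f z).re ≤ 1)
    (α : Fin n → ℕ) (hα : 1 ≤ ∑ k, α k) :
    ‖a α + b α‖ ≤
      2 * (((((∑ k, α k : ℕ) : ℝ) ^ (∑ k, α k)) / ∏ k, ((α k : ℝ) ^ (α k))) ^ (p.toReal)⁻¹) *
        (1 - (f 0).re) := by
  have hp0 : p ≠ 0 := (zero_lt_one.trans_le hp).ne'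
  have hα0 : α ≠ 0 := by rintro rfl; simp at hα
  have h0 : pnormE p (0 : Fin n → ℂ) < 1 := by rw [pnormE_zero hp0]; exact zero_lt_one
  have hf0 : (f 0).re = ((a + b) 0).re := by
    rw [hfd 0 h0, (hha 0 h0).unique (hasSum_mul_prod_zero_pow a),
      (hgb 0 h0).unique (hasSum_mul_prod_zero_pow b)]
    simp
  have key := norm_coeff_mul_prod_le hp0 (c := a + b) (φ := h + g)
    (fun z hz => by simpa only [Pi.add_apply, add_mul] using (hha z hz).add (hgb z hz))
    (fun z hz => by simpa [hfd z hz] using hre z hz)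
    (monomialMaximizer_nonneg p α) (pnormE_monomialMaximizer_le_one hp0 hα0) hα0
  rw [prod_monomialMaximizer_pow, ← hf0] at key
  have hprod : 0 < ∏ k, (α k : ℝ) ^ α k :=
    Finset.prod_pos fun k _ => by exact_mod_cast Nat.pow_self_pos
  have hT : 0 < ((∏ k, (α k : ℝ) ^ α k) / (∑ k, α k : ℕ) ^ (∑ k, α k)) ^ p.toReal⁻¹ :=
    Real.rpow_pos_of_pos (div_pos hprod (pow_pos (by exact_mod_cast hα) _)) _
  calc ‖a α + b α‖ ≤ 2 * (1 - (f 0).re) / _ := (le_div_iff₀ hT).mpr key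
    _ = _ := by rw [← inv_div (∏ k, (α k : ℝ) ^ α k), Real.inv_rpow (by positivity)]; ring

theorem stmt8 (n : ℕ) (hn : 1 ≤ n) (p : ℝ≥0∞) (hp : 1 ≤ p)
    (f h g : (Fin n → ℂ) → ℂ) (a b : (Fin n → ℕ) → ℂ) (hb0 : b 0 = 0)
    (hh : DifferentiableOn ℂ h {z | pnormE p z < 1})
    (hg : DifferentiableOn ℂ g {z | pnormE p z < 1})
    (hg0 : g 0 = 0)
    (hfd : ∀ z : Fin n → ℂ, pnormE p z < 1 → f z = h z + (starRingEnd ℂ) (g z))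
    (hha : ∀ z : Fin n → ℂ, pnormE p z < 1 →
      HasSum (fun α : Fin n → ℕ => a α * ∏ k, z k ^ α k) (h z))
    (hgb : ∀ z : Fin n → ℂ, pnormE p z < 1 →
      HasSum (fun α : Fin n → ℕ => b α * ∏ k, z k ^ α k) (g z))
    (hre : ∀ z : Fin n → ℂ, pnormE p z < 1 → (f z).re ≤ 1)
    (α : Fin n → ℕ) (hα : 1 ≤ ∑ k, α k) :
    ‖a α + b α‖ ≤
      2 * (((((∑ k, α k : ℕ) : ℝ) ^ (∑ k, α k)) / ∏ k, ((α k : ℝ) ^ (α k))) ^ (p.toReal)⁻¹) *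
        (1 - (f 0).re) :=
  stmt8_general n p hp f h g a b hfd hha hgb hre α hα
end

section
/- Let p ∈ [2,∞] and n ≥ 1. If f(z) = Σ_α a_α z^α + Σ_{|α|≥1} conj(b_α) conj(z)^α is a pluriharmonic function on 𝔹_{ℓ_pⁿ} with sup_{z ∈ 𝔹_{ℓ_pⁿ}} |f(z)| ≤ 1, then for every z with ‖z‖_p ≤ π / ((π + 4√2)√n), one has Σ_{k=1}^{∞} Σ_{|α|=k} (|a_α| + |b_α|) |z^α| ≤ 1. -/
open scoped BigOperators ENNReal

/-!
Put `c = √(3n)` and `ρ_k = c |z_k|`. The torus `{(ρ_k e^{iθ_k})}` lies in the ball since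
`c ‖z‖_p ≤ √3 π / (π + 4√2) < 1`, and on it the monomial `z^α` becomes `ρ^α` times the character
`e^{i⟨α,θ⟩}`. Hence `a_α ρ^α` and `conj (b_α ρ^α)` are the Fourier coefficients of `f` at `α` and
`-α`, and these frequencies are distinct for `α ≠ 0`, so Parseval and `|f| ≤ 1` give
`∑_{α ≠ 0} (|a_α|² + |b_α|²) ρ^{2α} ≤ 1`. As `|z^α| = ρ^α c^{-|α|}`, Cauchy–Schwarz bounds the
Bohr sum by the square root of `2 ∑_{α ≠ 0} (3n)^{-|α|} = 2 ((1 - 1/(3n))^{-n} - 1) ≤ 1`,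
the last step by Bernoulli's inequality.
-/

open MeasureTheory UnitAddTorus
open scoped ComplexConjugate Real

-- Mathlib's Fourier analysis on the torus uses the Haar probability measure on `UnitAddCircle`,
-- which it installs only as a local instance.
attribute [local instance] instMeasureSpaceUnitAddCircle instIsProbabilityMeasureUnitAddCircleVolume

namespace UnitAddTorus

variable {d : Type*} [Fintype d]

theorem sum_sq_norm_mFourierCoeff_le_one (f : C(UnitAddTorus d, ℂ)) (hf : ∀ t, ‖f t‖ ≤ 1)
    (S : Finset (d → ℤ)) : ∑ k ∈ S, ‖mFourierCoeff f k‖ ^ 2 ≤ 1 := by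
  have h := hasSum_sq_mFourierCoeff (ContinuousMap.toLp 2 volume ℂ f)
  simp only [mFourierCoeff_toLp] at h
  refine (sum_le_hasSum S (fun _ _ => sq_nonneg _) h).trans ?_
  calc ∫ t, ‖(ContinuousMap.toLp 2 volume ℂ f) t‖ ^ 2 = ∫ t, ‖f t‖ ^ 2 :=
        integral_congr_ae <| (ContinuousMap.coeFn_toLp (p := 2) (𝕜 := ℂ) volume f).mono
          fun t ht => by simp only [ht]
    _ ≤ ∫ _t : UnitAddTorus d, (1 : ℝ) :=
        integral_mono_of_nonneg (.of_forall fun t => sq_nonneg _) (integrable_const 1)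
          (.of_forall fun t => pow_le_one₀ (norm_nonneg _) (hf t))
    _ = 1 := by simp

theorem mFourierCoeff_eq_inner (f : C(UnitAddTorus d, ℂ)) (k : d → ℤ) :
    mFourierCoeff f k = inner ℂ (mFourierLp 2 k) (ContinuousMap.toLp 2 volume ℂ f) := by
  rw [← mFourierCoeff_toLp, ← mFourierBasis_repr, HilbertBasis.repr_apply_apply,
    coe_mFourierBasis]

theorem mFourierCoeff_mFourier (m k : d → ℤ) :
    mFourierCoeff (mFourier m) k = if m = k then 1 else 0 := by
  rw [mFourierCoeff_eq_inner, orthonormal_iff_ite.mp orthonormal_mFourier]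
  exact if_congr eq_comm rfl rfl

theorem hasSum_mFourierCoeff_of_hasSum {ι : Type*} {c : ι → ℂ} {e : ι → d → ℤ}
    {f : C(UnitAddTorus d, ℂ)} (hf : HasSum (fun i => c i • mFourier (e i)) f) (k : d → ℤ) :
    HasSum (fun i => if e i = k then c i else 0) (mFourierCoeff f k) := by
  have h := hf.mapL ((innerSL ℂ (mFourierLp 2 k)).comp (ContinuousMap.toLp 2 volume ℂ))
  simpa only [ContinuousLinearMap.comp_apply, map_smul, innerSL_apply_apply,
    ← mFourierCoeff_eq_inner, mFourierCoeff_mFourier, smul_eq_mul, mul_ite, mul_one,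
    mul_zero] using h

theorem mFourierCoeff_add_star (f g : C(UnitAddTorus d, ℂ)) (k : d → ℤ) :
    mFourierCoeff (f + star g) k = mFourierCoeff f k + conj (mFourierCoeff g (-k)) := by
  rw [mFourierCoeff_eq_inner, map_add, inner_add_right, ← mFourierCoeff_eq_inner,
    ← mFourierCoeff_eq_inner]
  simp only [mFourierCoeff, ContinuousMap.star_apply, neg_neg, smul_eq_mul, ← integral_conj,
    map_mul, ← mFourier_neg]
  rfl

theorem mFourier_apply_zero (m : d → ℤ) : mFourier m 0 = 1 := by
  simp [mFourier]

theorem mFourierCoeff_natCast_of_hasSum {u : (d → ℕ) → ℂ} {f : C(UnitAddTorus d, ℂ)}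
    (hf : HasSum (fun α => u α • mFourier (Nat.cast ∘ α)) f) (α : d → ℕ) :
    mFourierCoeff f (Nat.cast ∘ α) = u α := by
  refine (hasSum_mFourierCoeff_of_hasSum hf _).unique ?_
  simp only [(Nat.cast_injective.comp_left).eq_iff]
  convert hasSum_ite_eq α (u α) using 2 with β
  split_ifs with h <;> simp only [h]

theorem mFourierCoeff_neg_natCast_of_hasSum {u : (d → ℕ) → ℂ} {f : C(UnitAddTorus d, ℂ)}
    (hf : HasSum (fun α => u α • mFourier (Nat.cast ∘ α)) f) {α : d → ℕ} (hα : α ≠ 0) :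
    mFourierCoeff f (-(Nat.cast ∘ α)) = 0 := by
  refine (hasSum_mFourierCoeff_of_hasSum hf _).unique ?_
  obtain ⟨j, hj⟩ := Function.ne_iff.mp hα
  convert hasSum_zero with β
  rw [if_neg fun h => hj ?_]
  have := congr_fun h j
  simp only [Function.comp_apply, Pi.neg_apply, Pi.zero_apply] at this ⊢
  omega

theorem exists_hasSum_natCast_mFourier {u : (d → ℕ) → ℂ} {H : UnitAddTorus d → ℂ}
    (hH : ∀ θ, HasSum (fun α => u α * mFourier (Nat.cast ∘ α) θ) (H θ)) :
    ∃ f : C(UnitAddTorus d, ℂ), ⇑f = H ∧ HasSum (fun α => u α • mFourier (Nat.cast ∘ α)) f := by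
  have hu : Summable fun α => ‖u α‖ :=
    summable_norm_iff.mpr (by simpa only [mFourier_apply_zero, mul_one] using (hH 0).summable)
  obtain ⟨f, hf⟩ : Summable fun α => u α • mFourier (Nat.cast ∘ α : d → ℤ) :=
    .of_norm (by simpa only [norm_smul, mFourier_norm, mul_one] using hu)
  exact ⟨f, funext fun θ => ((ContinuousMap.evalCLM ℂ θ).hasSum hf).unique (hH θ), hf⟩

theorem sum_sq_norm_add_sq_norm_le_one {u v : (d → ℕ) → ℂ} {H G : UnitAddTorus d → ℂ}
    (hH : ∀ θ, HasSum (fun α => u α * mFourier (Nat.cast ∘ α) θ) (H θ))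
    (hG : ∀ θ, HasSum (fun α => v α * mFourier (Nat.cast ∘ α) θ) (G θ))
    (hbound : ∀ θ, ‖H θ + conj (G θ)‖ ≤ 1) {s : Finset (d → ℕ)} (hs : 0 ∉ s) :
    ∑ α ∈ s, (‖u α‖ ^ 2 + ‖v α‖ ^ 2) ≤ 1 := by
  classical
  obtain ⟨U, rfl, hU⟩ := exists_hasSum_natCast_mFourier hH
  obtain ⟨V, rfl, hV⟩ := exists_hasSum_natCast_mFourier hG
  have hα : ∀ α ∈ s, α ≠ 0 := fun α hα h => hs (h ▸ hα)
  have hcoeff_pos : ∀ α ∈ s, mFourierCoeff (U + star V) (Nat.cast ∘ α) = u α := fun α hαs => by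
    rw [mFourierCoeff_add_star, mFourierCoeff_natCast_of_hasSum hU,
      mFourierCoeff_neg_natCast_of_hasSum hV (hα α hαs), map_zero, add_zero]
  have hcoeff_neg : ∀ α ∈ s, mFourierCoeff (U + star V) (-(Nat.cast ∘ α)) = conj (v α) :=
    fun α hαs => by
    rw [mFourierCoeff_add_star, mFourierCoeff_neg_natCast_of_hasSum hU (hα α hαs), neg_neg,
      mFourierCoeff_natCast_of_hasSum hV, zero_add]
  have hinj : Function.Injective (Nat.cast ∘ · : (d → ℕ) → d → ℤ) := Nat.cast_injective.comp_left
  have hdisj : Disjoint (s.image fun α => (Nat.cast ∘ α : d → ℤ))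
      (s.image fun α => -(Nat.cast ∘ α : d → ℤ)) := by
    simp only [Finset.disjoint_left, Finset.mem_image, not_exists, not_and]
    rintro _ ⟨α, hαs, rfl⟩ β hβs hβα
    obtain ⟨j, hj⟩ := Function.ne_iff.mp (hα α hαs)
    have := congr_fun hβα j
    simp only [Function.comp_apply, Pi.neg_apply, Pi.zero_apply] at this hj
    omega
  calc ∑ α ∈ s, (‖u α‖ ^ 2 + ‖v α‖ ^ 2)
      = ∑ k ∈ (s.image fun α => (Nat.cast ∘ α : d → ℤ)) ∪ s.image fun α => -(Nat.cast ∘ α),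
          ‖mFourierCoeff (U + star V) k‖ ^ 2 := by
        rw [Finset.sum_union hdisj, Finset.sum_image fun _ _ _ _ h => hinj h,
          Finset.sum_image fun _ _ _ _ h => hinj (neg_injective h), ← Finset.sum_add_distrib]
        refine Finset.sum_congr rfl fun α hαs => ?_
        rw [hcoeff_pos α hαs, hcoeff_neg α hαs, RCLike.norm_conj]
    _ ≤ 1 := sum_sq_norm_mFourierCoeff_le_one _ (fun θ => by simpa using hbound θ) _

end UnitAddTorus

section Polydisc

variable {d : Type*}

noncomputable def torusPoint (ρ : d → ℝ) (θ : UnitAddTorus d) : d → ℂ :=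
  fun k => ρ k * (θ k).toCircle

theorem norm_torusPoint (ρ : d → ℝ) (θ : UnitAddTorus d) (k : d) :
    ‖torusPoint ρ θ k‖ = |ρ k| := by
  simp [torusPoint, Circle.norm_coe]

theorem prod_torusPoint_pow [Fintype d] (ρ : d → ℝ) (θ : UnitAddTorus d) (α : d → ℕ) :
    ∏ k, torusPoint ρ θ k ^ α k = (∏ k, (ρ k : ℂ) ^ α k) * mFourier (Nat.cast ∘ α) θ := by
  simp [torusPoint, mFourier, mul_pow, Finset.prod_mul_distrib, fourier_apply, natCast_zsmul,
    AddCircle.toCircle_nsmul]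

theorem sum_sq_norm_mul_sq_prod_le_one [Fintype d] {a b : (d → ℕ) → ℂ} {H G : (d → ℂ) → ℂ}
    (ρ : d → ℝ)
    (ha : ∀ θ, HasSum (fun α => a α * ∏ k, torusPoint ρ θ k ^ α k) (H (torusPoint ρ θ)))
    (hb : ∀ θ, HasSum (fun α => b α * ∏ k, torusPoint ρ θ k ^ α k) (G (torusPoint ρ θ)))
    (hbound : ∀ θ, ‖H (torusPoint ρ θ) + conj (G (torusPoint ρ θ))‖ ≤ 1)
    {s : Finset (d → ℕ)} (hs : 0 ∉ s) :
    ∑ α ∈ s, (‖a α‖ ^ 2 + ‖b α‖ ^ 2) * (∏ k, ρ k ^ α k) ^ 2 ≤ 1 := by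
  have key := UnitAddTorus.sum_sq_norm_add_sq_norm_le_one
    (u := fun α => a α * ∏ k, (ρ k : ℂ) ^ α k) (v := fun α => b α * ∏ k, (ρ k : ℂ) ^ α k)
    (fun θ => by simpa only [prod_torusPoint_pow, mul_assoc] using ha θ)
    (fun θ => by simpa only [prod_torusPoint_pow, mul_assoc] using hb θ) hbound hs
  convert key using 2 with α
  simp only [norm_mul, mul_pow, ← Complex.ofReal_pow, ← Complex.ofReal_prod, Complex.norm_real,
    Real.norm_eq_abs, sq_abs]
  ring

end Polydisc

theorem sum_pow_sum_le {d : Type*} [Fintype d] {x : ℝ} (hx0 : 0 ≤ x) (hx1 : x < 1)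
    {s : Finset (d → ℕ)} (hs : 0 ∉ s) :
    ∑ α ∈ s, x ^ (∑ k, α k) ≤ (1 - x)⁻¹ ^ Fintype.card d - 1 := by
  classical
  have hsub : s ⊆ (Fintype.piFinset fun k => insert 0 (s.image (· k))).erase 0 := fun α hα =>
    Finset.mem_erase.mpr ⟨fun h => hs (h ▸ hα),
      Fintype.mem_piFinset.mpr fun k => Finset.mem_insert_of_mem (Finset.mem_image_of_mem _ hα)⟩
  have h0 : (0 : d → ℕ) ∈ Fintype.piFinset fun k => insert 0 (s.image (· k)) :=
    Fintype.mem_piFinset.mpr fun k => Finset.mem_insert_self _ _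
  have hgeom : ∀ t : Finset ℕ, ∑ m ∈ t, x ^ m ≤ (1 - x)⁻¹ := fun t =>
    ((summable_geometric_of_lt_one hx0 hx1).sum_le_tsum t fun m _ => pow_nonneg hx0 m).trans
      (tsum_geometric_of_lt_one hx0 hx1).le
  calc ∑ α ∈ s, x ^ (∑ k, α k)
      ≤ ∑ α ∈ (Fintype.piFinset fun k => insert 0 (s.image (· k))).erase 0, ∏ k, x ^ α k := by
        simp only [Finset.prod_pow_eq_pow_sum]
        exact Finset.sum_le_sum_of_subset_of_nonneg hsub fun _ _ _ => by positivity
    _ = ∏ k, ∑ m ∈ insert 0 (s.image (· k)), x ^ m - 1 := by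
        rw [Finset.sum_erase_eq_sub h0, Finset.prod_univ_sum]
        simp
    _ ≤ ∏ _k : d, (1 - x)⁻¹ - 1 := by
        gcongr with k
        exact hgeom _
    _ = (1 - x)⁻¹ ^ Fintype.card d - 1 := by rw [Finset.prod_const, Finset.card_univ]

theorem sum_pow_sum_le_half {d : Type*} [Fintype d] {x : ℝ} (hx0 : 0 ≤ x) (hx1 : x < 1)
    (hdx : Fintype.card d * x ≤ 1 / 3) {s : Finset (d → ℕ)} (hs : 0 ∉ s) :
    ∑ α ∈ s, x ^ (∑ k, α k) ≤ 1 / 2 := by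
  have hbernoulli : 2 / 3 ≤ (1 - x) ^ Fintype.card d := by
    have := one_add_mul_le_pow (a := -x) (by linarith) (Fintype.card d)
    rw [← sub_eq_add_neg] at this
    linarith
  have : (1 - x)⁻¹ ^ Fintype.card d ≤ 3 / 2 := by
    rw [inv_pow, inv_le_comm₀ (by positivity) (by norm_num)]
    linarith
  linarith [sum_pow_sum_le hx0 hx1 hs]

theorem Finset.sum_add_mul_le_one {ι : Type*} (s : Finset ι) {A B G : ι → ℝ}
    (hAB : ∑ i ∈ s, (A i ^ 2 + B i ^ 2) ≤ 1) (hG : ∑ i ∈ s, G i ^ 2 ≤ 1 / 2) :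
    ∑ i ∈ s, (A i + B i) * G i ≤ 1 := by
  have hAB' : ∑ i ∈ s, (A i + B i) ^ 2 ≤ 2 := by
    calc ∑ i ∈ s, (A i + B i) ^ 2 ≤ ∑ i ∈ s, 2 * (A i ^ 2 + B i ^ 2) :=
          Finset.sum_le_sum fun i _ => by nlinarith [sq_nonneg (A i - B i)]
      _ ≤ 2 := by rw [← Finset.mul_sum]; linarith
  have hCS := Finset.sum_mul_sq_le_sq_mul_sq s (fun i => A i + B i) G
  have hG0 : 0 ≤ ∑ i ∈ s, G i ^ 2 := Finset.sum_nonneg fun i _ => sq_nonneg _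
  nlinarith

theorem pnormE_eq_mul_of_norm_eq {n : ℕ} {p : ℝ≥0∞} (hp : p ≠ 0) {c : ℝ} (hc : 0 ≤ c)
    {w z : Fin n → ℂ} (hw : ∀ j, ‖w j‖ = c * ‖z j‖) : pnormE p w = c * pnormE p z := by
  simp only [pnormE, hw]
  split_ifs with hptop
  · exact (Real.mul_iSup_of_nonneg hc _).symm
  · have hp0 : p.toReal ≠ 0 := (ENNReal.toReal_pos hp hptop).ne'
    simp only [Real.mul_rpow hc (norm_nonneg _), ← Finset.mul_sum]
    rw [Real.mul_rpow (by positivity) (by positivity), ← Real.rpow_mul hc,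
      mul_one_div_cancel hp0, Real.rpow_one]

theorem pnormE_torusPoint_mul_norm {n : ℕ} {p : ℝ≥0∞} (hp : p ≠ 0) {c : ℝ} (hc : 0 ≤ c)
    (z : Fin n → ℂ) (θ : UnitAddTorus (Fin n)) :
    pnormE p (torusPoint (fun k => c * ‖z k‖) θ) = c * pnormE p z :=
  pnormE_eq_mul_of_norm_eq hp hc fun k => by
    rw [norm_torusPoint, abs_of_nonneg (by positivity)]

theorem norm_prod_pow_eq_mul_inv_pow {d : Type*} [Fintype d] {c : ℝ} (hc : c ≠ 0) (z : d → ℂ)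
    (α : d → ℕ) : ‖∏ k, z k ^ α k‖ = (∏ k, (c * ‖z k‖) ^ α k) * c⁻¹ ^ ∑ k, α k := by
  simp only [norm_prod, norm_pow, mul_pow, Finset.prod_mul_distrib, Finset.prod_pow_eq_pow_sum]
  rw [mul_comm _ (∏ k, _), mul_assoc, ← mul_pow, mul_inv_cancel₀ hc, one_pow, mul_one]

theorem sqrt_three_mul_pi_div_lt_one : √3 * (π / (π + 4 * √2)) < 1 := by
  have h2 : (1.41 : ℝ) < √2 := by
    rw [Real.lt_sqrt (by norm_num)]; norm_num
  have h3 : √3 < 1.74 := by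
    rw [Real.sqrt_lt' (by norm_num)]; norm_num
  have hpi := Real.pi_lt_d2
  rw [mul_div_assoc', div_lt_one (by positivity)]
  nlinarith [Real.pi_pos]

theorem stmt12_general (n : ℕ) (p : ℝ≥0∞) (hp : 2 ≤ p)
    (f h g : (Fin n → ℂ) → ℂ) (a b : (Fin n → ℕ) → ℂ)
    (hfd : ∀ z : Fin n → ℂ, pnormE p z < 1 → f z = h z + (starRingEnd ℂ) (g z))
    (hha : ∀ z : Fin n → ℂ, pnormE p z < 1 →
      HasSum (fun α : Fin n → ℕ => a α * ∏ k, z k ^ α k) (h z))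
    (hgb : ∀ z : Fin n → ℂ, pnormE p z < 1 →
      HasSum (fun α : Fin n → ℕ => b α * ∏ k, z k ^ α k) (g z))
    (hmap : ∀ z : Fin n → ℂ, pnormE p z < 1 → ‖f z‖ ≤ 1)
    (z : Fin n → ℂ)
    (hz : pnormE p z ≤ Real.pi / ((Real.pi + 4 * Real.sqrt 2) * Real.sqrt n)) :
    -- the (nonnegative-term) Bohr sum over all multi-indices with `|α| ≥ 1`
    -- is at most 1, i.e. every finite partial sum is at most 1
    ∀ s : Finset (Fin n → ℕ), 0 ∉ s →
      ∑ α ∈ s, (‖a α‖ + ‖b α‖) * ‖∏ k, z k ^ α k‖ ≤ 1 := by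
  intro s hs
  rcases Nat.eq_zero_or_pos n with rfl | hn
  · simp [Finset.eq_empty_of_forall_notMem fun α (hα : α ∈ s) => hs (Subsingleton.elim α 0 ▸ hα)]
  set c := √(3 * n) with hc_def
  have hc : 0 < c := by positivity
  set ρ : Fin n → ℝ := fun k => c * ‖z k‖
  have hball : ∀ θ, pnormE p (torusPoint ρ θ) < 1 := fun θ => by
    rw [pnormE_torusPoint_mul_norm (two_pos.trans_le hp).ne' hc.le]
    calc c * pnormE p z ≤ c * (π / ((π + 4 * √2) * √n)) := by gcongr
      _ = √3 * (π / (π + 4 * √2)) := by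
        rw [hc_def, Real.sqrt_mul (by norm_num)]
        field_simp
      _ < 1 := sqrt_three_mul_pi_div_lt_one
  have hcoeff := sum_sq_norm_mul_sq_prod_le_one ρ (fun θ => hha _ (hball θ))
    (fun θ => hgb _ (hball θ)) (fun θ => hfd _ (hball θ) ▸ hmap _ (hball θ)) hs
  have hc2 : c⁻¹ ^ 2 = (3 * (n : ℝ))⁻¹ := by rw [inv_pow, hc_def, Real.sq_sqrt (by positivity)]
  have hgeom := sum_pow_sum_le_half (x := c⁻¹ ^ 2) (by positivity)
    (by rw [hc2]; exact inv_lt_one_of_one_lt₀ (by norm_cast; omega))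
    (by rw [hc2, Fintype.card_fin]; exact le_of_eq (by field_simp)) hs
  calc ∑ α ∈ s, (‖a α‖ + ‖b α‖) * ‖∏ k, z k ^ α k‖
      = ∑ α ∈ s, (‖a α‖ * ∏ k, ρ k ^ α k + ‖b α‖ * ∏ k, ρ k ^ α k) * c⁻¹ ^ ∑ k, α k := by
        simp only [norm_prod_pow_eq_mul_inv_pow hc.ne' z]
        exact Finset.sum_congr rfl fun α _ => by ring
    _ ≤ 1 := Finset.sum_add_mul_le_one s
        ((Finset.sum_congr rfl fun α _ => by ring).trans_le hcoeff)
        (by simpa only [pow_right_comm _ 2] using hgeom)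

theorem stmt12 (n : ℕ) (hn : 1 ≤ n) (p : ℝ≥0∞) (hp : 2 ≤ p)
    (f h g : (Fin n → ℂ) → ℂ) (a b : (Fin n → ℕ) → ℂ) (hb0 : b 0 = 0)
    (hh : DifferentiableOn ℂ h {z | pnormE p z < 1})
    (hg : DifferentiableOn ℂ g {z | pnormE p z < 1})
    (hg0 : g 0 = 0)
    (hfd : ∀ z : Fin n → ℂ, pnormE p z < 1 → f z = h z + (starRingEnd ℂ) (g z))
    (hha : ∀ z : Fin n → ℂ, pnormE p z < 1 →
      HasSum (fun α : Fin n → ℕ => a α * ∏ k, z k ^ α k) (h z))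
    (hgb : ∀ z : Fin n → ℂ, pnormE p z < 1 →
      HasSum (fun α : Fin n → ℕ => b α * ∏ k, z k ^ α k) (g z))
    (hmap : ∀ z : Fin n → ℂ, pnormE p z < 1 → ‖f z‖ ≤ 1)
    (z : Fin n → ℂ)
    (hz : pnormE p z ≤ Real.pi / ((Real.pi + 4 * Real.sqrt 2) * Real.sqrt n)) :
    -- the (nonnegative-term) Bohr sum over all multi-indices with `|α| ≥ 1`
    -- is at most 1, i.e. every finite partial sum is at most 1
    ∀ s : Finset (Fin n → ℕ), 0 ∉ s →
      ∑ α ∈ s, (‖a α‖ + ‖b α‖) * ‖∏ k, z k ^ α k‖ ≤ 1 :=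
  stmt12_general n p hp f h g a b hfd hha hgb hmap z hz
end

section
/- Let p ∈ [1,∞] and n = 1, so 𝔹_{ℓ_p^1} = 𝔻. If f(z) = Σ_{j=0}^{∞} a_j z^j + Σ_{j=1}^{∞} conj(b_j) z̄^j is a harmonic function on 𝔻 with sup_{z ∈ 𝔻} Re(f(z)) ≤ 1 and f(0) ≥ 0 (f(0) real nonnegative), then Σ_{j=0}^{∞} |(a_j + b_j) z^j| ≤ 1 for all |z| ≤ 1/3. Moreover, the constant 1/3 is sharp: for every r > 1/3 there is such a function (namely f(z) = −2z/(1−z)) for which Σ_j |a_j + b_j| r^j > 1. -/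
/-!
Writing `f = h + conj g`, the function `F = h + g` is holomorphic with Taylor coefficients
`a j + b j`, `Re F = Re f ≤ 1` and `F 0 = f 0`. Carathéodory's bound for `1 - F` gives
`‖a j + b j‖ ≤ 2 (1 - f 0)` for `j ≥ 1`: for `G = ∑ c j z^j` with `Re G ≥ 0`, the `j`-th Fourier
coefficient of `Re G = (G + conj G) / 2` on the circle of radius `ρ` is `c j ρ^j / 2`, and its
norm is at most the mean of `Re G`, which is `Re (c 0)`. Summing against `|z|^j ≤ 3^{-j}` gives
`f 0 + 2 (1 - f 0) · (1/2) = 1`. For sharpness, `-2z/(1-z) = -2 ∑_{j ≥ 1} z^j` has real part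
`1 - Re ((1+z)/(1-z)) ≤ 1`, while `∑_{j ≥ 1} 2 r^j = 2r/(1-r) > 1` once `r > 1/3`.
-/

open Complex Metric Filter Topology MeasureTheory
open scoped Real ComplexConjugate

theorem integral_exp_int_mul_mul_I (m : ℤ) :
    ∫ θ in (0 : ℝ)..2 * π, exp (m * θ * I) = if m = 0 then 2 * π else 0 := by
  split_ifs with hm
  · simp [hm]
  · have hmI : (m : ℂ) * I ≠ 0 := by simp [hm]
    simp_rw [mul_right_comm _ _ I]
    rw [integral_exp_mul_complex hmI, ofReal_zero, mul_zero, Complex.exp_zero,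
      show (m : ℂ) * I * ↑(2 * π) = m * (2 * π * I) by push_cast; ring,
      exp_int_mul_two_pi_mul_I, sub_self, zero_div]

theorem circleMap_mem_ball_zero_one {ρ : ℝ} (hρ0 : 0 ≤ ρ) (hρ1 : ρ < 1) (θ : ℝ) :
    circleMap 0 ρ θ ∈ ball (0 : ℂ) 1 := by
  simpa [abs_of_nonneg hρ0] using hρ1

section PowerSeries

variable {c : ℕ → ℂ} {F : ℂ → ℂ} {ρ : ℝ}

theorem summable_norm_mul_pow_of_hasSum
    (hF : ∀ z ∈ ball (0 : ℂ) 1, HasSum (fun k ↦ c k * z ^ k) (F z)) (hρ0 : 0 ≤ ρ) (hρ1 : ρ < 1) :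
    Summable fun k ↦ ‖c k‖ * ρ ^ k := by
  obtain ⟨σ, hρσ, hσ1⟩ := exists_between hρ1
  have hσ0 : 0 < σ := hρ0.trans_lt hρσ
  have hσ : (σ : ℂ) ∈ ball (0 : ℂ) 1 := by simpa [abs_of_pos hσ0] using hσ1
  obtain ⟨M, hM⟩ := (hF _ hσ).summable.tendsto_atTop_zero.norm.bddAbove_range
  refine .of_nonneg_of_le (fun k ↦ by positivity) (fun k ↦ ?_)
    ((summable_geometric_of_lt_one (by positivity) ((div_lt_one hσ0).2 hρσ)).mul_left M)
  calc ‖c k‖ * ρ ^ k = ‖c k * (σ : ℂ) ^ k‖ * (ρ / σ) ^ k := by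
        rw [norm_mul, norm_pow, norm_real, Real.norm_of_nonneg hσ0.le, div_pow]
        field_simp
    _ ≤ M * (ρ / σ) ^ k := by gcongr; exact hM ⟨k, rfl⟩

theorem hasSum_integral_comp_circleMap_mul_exp
    (hF : ∀ z ∈ ball (0 : ℂ) 1, HasSum (fun k ↦ c k * z ^ k) (F z)) (hρ0 : 0 ≤ ρ) (hρ1 : ρ < 1)
    (n : ℤ) :
    HasSum (fun k : ℕ ↦ c k * ρ ^ k * ∫ θ in (0 : ℝ)..2 * π, exp (((k + n : ℤ) : ℂ) * θ * I))
      (∫ θ in (0 : ℝ)..2 * π, F (circleMap 0 ρ θ) * exp (n * θ * I)) := by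
  have hterm : ∀ (k : ℕ) (θ : ℝ), c k * circleMap 0 ρ θ ^ k * exp (n * θ * I) =
      c k * ρ ^ k * exp (((k + n : ℤ) : ℂ) * θ * I) := by
    intro k θ
    rw [circleMap_zero_pow, circleMap_zero, mul_assoc, mul_assoc, ← Complex.exp_add]
    push_cast
    ring_nf
  simp_rw [← intervalIntegral.integral_const_mul]
  refine intervalIntegral.hasSum_integral_of_dominated_convergence (fun k _ ↦ ‖c k‖ * ρ ^ k)
    (fun k ↦ (by fun_prop : Continuous _).aestronglyMeasurable) (fun k ↦ ?_)
    (ae_of_all _ fun _ _ ↦ summable_norm_mul_pow_of_hasSum hF hρ0 hρ1) intervalIntegrable_const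
    (ae_of_all _ fun θ _ ↦ ?_)
  · refine ae_of_all _ fun θ _ ↦ le_of_eq ?_
    rw [norm_mul, norm_mul, norm_pow, norm_real, Real.norm_of_nonneg hρ0, ← ofReal_intCast,
      ← ofReal_mul, norm_exp_ofReal_mul_I, mul_one]
  · simpa only [hterm] using (hF _ (circleMap_mem_ball_zero_one hρ0 hρ1 θ)).mul_right
      (exp (n * θ * I))

theorem integral_comp_circleMap_mul_exp_neg
    (hF : ∀ z ∈ ball (0 : ℂ) 1, HasSum (fun k ↦ c k * z ^ k) (F z)) (hρ0 : 0 ≤ ρ) (hρ1 : ρ < 1)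
    (j : ℕ) :
    ∫ θ in (0 : ℝ)..2 * π, F (circleMap 0 ρ θ) * exp (-j * θ * I) = 2 * π * c j * ρ ^ j := by
  have h := hasSum_integral_comp_circleMap_mul_exp hF hρ0 hρ1 (-j)
  rw [Int.cast_neg, Int.cast_natCast] at h
  refine h.unique ?_
  convert hasSum_ite_eq j (2 * π * c j * ρ ^ j) using 2 with k
  rw [integral_exp_int_mul_mul_I]
  rcases eq_or_ne k j with rfl | hk
  · simp only [add_neg_cancel, if_true]; push_cast; ring
  · simp [hk, show (k : ℤ) + -j ≠ 0 by omega]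

theorem integral_comp_circleMap_mul_exp_eq_zero
    (hF : ∀ z ∈ ball (0 : ℂ) 1, HasSum (fun k ↦ c k * z ^ k) (F z)) (hρ0 : 0 ≤ ρ) (hρ1 : ρ < 1)
    {j : ℕ} (hj : 0 < j) :
    ∫ θ in (0 : ℝ)..2 * π, F (circleMap 0 ρ θ) * exp (j * θ * I) = 0 := by
  have h := hasSum_integral_comp_circleMap_mul_exp hF hρ0 hρ1 j
  rw [Int.cast_natCast] at h
  refine h.unique ?_
  convert hasSum_zero with k
  rw [integral_exp_int_mul_mul_I, if_neg (by omega), ofReal_zero, mul_zero]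

theorem integral_re_mul_exp_neg {G : ℝ → ℂ} (hG : Continuous G) (a b : ℝ) (j : ℕ) :
    ∫ θ in a..b, ((G θ).re : ℂ) * exp (-j * θ * I) =
      ((∫ θ in a..b, G θ * exp (-j * θ * I)) + conj (∫ θ in a..b, G θ * exp (j * θ * I))) / 2 := by
  rw [← intervalIntegral.intervalIntegral_conj, ← intervalIntegral.integral_add,
    ← intervalIntegral.integral_div]
  · refine intervalIntegral.integral_congr fun θ _ ↦ ?_
    rw [map_mul, ← exp_conj, re_eq_add_conj]
    simp only [map_mul, map_natCast, conj_ofReal, conj_I]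
    ring_nf
  all_goals exact Continuous.intervalIntegrable (by fun_prop) _ _

theorem norm_coeff_mul_pow_le_of_re_nonneg
    (hF : ∀ z ∈ ball (0 : ℂ) 1, HasSum (fun k ↦ c k * z ^ k) (F z))
    (hcont : ContinuousOn F (ball 0 1)) (hre : ∀ z ∈ ball (0 : ℂ) 1, 0 ≤ (F z).re)
    (hρ0 : 0 ≤ ρ) (hρ1 : ρ < 1) {j : ℕ} (hj : 0 < j) :
    ‖c j‖ * ρ ^ j ≤ 2 * (c 0).re := by
  have hG : Continuous fun θ ↦ F (circleMap 0 ρ θ) :=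
    hcont.comp_continuous (continuous_circleMap 0 ρ) (circleMap_mem_ball_zero_one hρ0 hρ1)
  have hmean : ∫ θ in (0 : ℝ)..2 * π, (F (circleMap 0 ρ θ)).re = 2 * π * (c 0).re := by
    have h0 := integral_comp_circleMap_mul_exp_neg hF hρ0 hρ1 0
    simp only [CharP.cast_eq_zero, neg_zero, zero_mul, Complex.exp_zero, mul_one,
      pow_zero] at h0
    simpa [h0] using
      intervalIntegral.intervalIntegral_re (hG.intervalIntegrable (μ := volume) 0 (2 * π))
  have hfourier : ∫ θ in (0 : ℝ)..2 * π, ((F (circleMap 0 ρ θ)).re : ℂ) * exp (-j * θ * I) =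
      π * c j * ρ ^ j := by
    rw [integral_re_mul_exp_neg hG, integral_comp_circleMap_mul_exp_neg hF hρ0 hρ1,
      integral_comp_circleMap_mul_exp_eq_zero hF hρ0 hρ1 hj, map_zero]
    ring
  have hnorm : π * (‖c j‖ * ρ ^ j) ≤ π * (2 * (c 0).re) :=
    calc π * (‖c j‖ * ρ ^ j)
        = ‖∫ θ in (0 : ℝ)..2 * π, ((F (circleMap 0 ρ θ)).re : ℂ) * exp (-j * θ * I)‖ := by
          rw [hfourier, norm_mul, norm_mul, norm_pow, norm_real, norm_real,
            Real.norm_of_nonneg Real.pi_pos.le, Real.norm_of_nonneg hρ0, mul_assoc]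
      _ ≤ ∫ θ in (0 : ℝ)..2 * π, (F (circleMap 0 ρ θ)).re := by
          refine intervalIntegral.norm_integral_le_of_norm_le (by positivity)
            (ae_of_all _ fun θ _ ↦ ?_) ((continuous_re.comp hG).intervalIntegrable _ _)
          simp [Complex.norm_exp, abs_of_nonneg (hre _ (circleMap_mem_ball_zero_one hρ0 hρ1 θ))]
      _ = π * (2 * (c 0).re) := by rw [hmean]; ring
  exact le_of_mul_le_mul_left hnorm Real.pi_pos

theorem norm_coeff_le_of_re_nonneg
    (hF : ∀ z ∈ ball (0 : ℂ) 1, HasSum (fun k ↦ c k * z ^ k) (F z))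
    (hcont : ContinuousOn F (ball 0 1)) (hre : ∀ z ∈ ball (0 : ℂ) 1, 0 ≤ (F z).re)
    {j : ℕ} (hj : 0 < j) :
    ‖c j‖ ≤ 2 * (c 0).re := by
  have hlim : Tendsto (fun ρ : ℝ ↦ ‖c j‖ * ρ ^ j) (𝓝[<] 1) (𝓝 ‖c j‖) :=
    ((continuous_const.mul (continuous_pow j)).tendsto' 1 _ (by simp)).mono_left
      nhdsWithin_le_nhds
  refine le_of_tendsto hlim ?_
  filter_upwards [Ioo_mem_nhdsLT zero_lt_one] with ρ hρ
  exact norm_coeff_mul_pow_le_of_re_nonneg hF hcont hre hρ.1.le hρ.2 hj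

theorem norm_coeff_le_of_re_le_one_s15
    (hF : ∀ z ∈ ball (0 : ℂ) 1, HasSum (fun k ↦ c k * z ^ k) (F z))
    (hcont : ContinuousOn F (ball 0 1)) (hre : ∀ z ∈ ball (0 : ℂ) 1, (F z).re ≤ 1)
    {j : ℕ} (hj : 0 < j) :
    ‖c j‖ ≤ 2 * (1 - (c 0).re) := by
  have hF' : ∀ z ∈ ball (0 : ℂ) 1,
      HasSum (fun k ↦ ((if k = 0 then 1 else 0) - c k) * z ^ k) (1 - F z) := by
    intro z hz
    have hcoeff : (fun k ↦ ((if k = 0 then 1 else 0) - c k) * z ^ k) =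
        fun k ↦ (if k = 0 then 1 else 0) - c k * z ^ k := by
      ext k
      split_ifs with hk <;> simp [hk]
    rw [hcoeff]
    exact (hasSum_ite_eq 0 1).sub (hF z hz)
  simpa [hj.ne'] using norm_coeff_le_of_re_nonneg hF' (continuousOn_const.sub hcont)
    (fun z hz ↦ by simpa using hre z hz) hj

theorem apply_zero_eq_coeff_zero
    (hF : ∀ z ∈ ball (0 : ℂ) 1, HasSum (fun k ↦ c k * z ^ k) (F z)) : F 0 = c 0 :=
  (hF 0 (mem_ball_self one_pos)).unique <| by
    simpa using hasSum_single (f := fun k ↦ c k * 0 ^ k) 0 fun k hk ↦ by simp [hk]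

end PowerSeries

theorem sum_norm_mul_pow_le_one {c : ℕ → ℂ} {t : ℝ} (h0 : ‖c 0‖ ≤ t)
    (hc : ∀ j, 0 < j → ‖c j‖ ≤ 2 * (1 - t)) {z : ℂ} (hz : ‖z‖ ≤ 1 / 3) (s : Finset ℕ) :
    ∑ j ∈ s, ‖c j * z ^ j‖ ≤ 1 := by
  set G : ℕ → ℝ := fun j ↦ if j = 0 then t else 2 * (1 - t) * (1 / 3) ^ j
  have hG : HasSum G 1 := by
    have h : HasSum (fun n : ℕ ↦ 2 * (1 - t) * (1 / 3) ^ (n + 1)) (1 - t) := by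
      have h := ((hasSum_geometric_of_lt_one (r := (1 / 3 : ℝ)) (by norm_num)
        (by norm_num)).mul_left (1 / 3)).mul_left (2 * (1 - t))
      simp_rw [← pow_succ'] at h
      rwa [show 2 * (1 - t) * (1 / 3 * (1 - 1 / 3)⁻¹) = 1 - t by norm_num; ring] at h
    rw [← hasSum_nat_add_iff' 1]
    simpa [G] using h
  have hle : ∀ j, ‖c j * z ^ j‖ ≤ G j := by
    intro j
    rcases Nat.eq_zero_or_pos j with rfl | hj
    · simpa [G] using h0
    · simp only [G, hj.ne', if_false, norm_mul, norm_pow]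
      exact mul_le_mul (hc j hj) (pow_le_pow_left₀ (norm_nonneg z) hz j) (by positivity)
        ((norm_nonneg _).trans (hc j hj))
  calc ∑ j ∈ s, ‖c j * z ^ j‖ ≤ ∑ j ∈ s, G j := Finset.sum_le_sum fun j _ ↦ hle j
    _ ≤ 1 := sum_le_hasSum s (fun j _ ↦ (norm_nonneg _).trans (hle j)) hG

theorem hasSum_neg_two_mul_div_one_sub {z : ℂ} (hz : ‖z‖ < 1) :
    HasSum (fun j : ℕ ↦ (if j = 0 then 0 else -2) * z ^ j) (-2 * z / (1 - z)) := by
  have h := (hasSum_geometric_of_norm_lt_one hz).mul_left (-2 * z)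
  simp_rw [mul_assoc, ← pow_succ'] at h
  rw [← hasSum_nat_add_iff' 1]
  simpa [div_eq_mul_inv, mul_assoc] using h

theorem re_neg_two_mul_div_one_sub_le_one {z : ℂ} (hz : ‖z‖ < 1) :
    (-2 * z / (1 - z)).re ≤ 1 := by
  have hz1 : 1 - z ≠ 0 := by
    rintro h
    simp [← sub_eq_zero.1 h] at hz
  rw [show -2 * z / (1 - z) = 1 - (1 + z) / (1 - z) by field_simp; ring, sub_re, one_re,
    sub_le_self_iff, div_re, ← add_div]
  refine div_nonneg ?_ (normSq_nonneg _)
  have hz2 : normSq z < 1 := by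
    rw [normSq_eq_norm_sq]
    nlinarith [norm_nonneg z]
  simp only [add_re, one_re, sub_re, add_im, one_im, sub_im, normSq_apply] at hz2 ⊢
  nlinarith

theorem exists_one_lt_sum_norm_mul_pow {r : ℝ} (hr : 1 / 3 < r) :
    ∃ s : Finset ℕ, 1 < ∑ j ∈ s, ‖(if j = 0 then (0 : ℂ) else -2)‖ * r ^ j := by
  rcases lt_or_ge r 1 with hr1 | hr1
  · have hsum : HasSum (fun j : ℕ ↦ ‖(if j = 0 then (0 : ℂ) else -2)‖ * r ^ j)
        (2 * r / (1 - r)) := by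
      have h := (hasSum_geometric_of_lt_one (by linarith) hr1).mul_left (2 * r)
      simp_rw [mul_assoc, ← pow_succ'] at h
      rw [← hasSum_nat_add_iff' 1]
      simpa [div_eq_mul_inv, mul_assoc] using h
    have hgt : 1 < 2 * r / (1 - r) := by rw [lt_div_iff₀ (by linarith)]; linarith
    obtain ⟨n, hn⟩ := (hsum.tendsto_sum_nat.eventually (lt_mem_nhds hgt)).exists
    exact ⟨Finset.range n, hn⟩
  · exact ⟨{1}, by norm_num; linarith⟩

theorem stmt15 :
    -- Bohr inequality for harmonic f = h + conj g on 𝔻 with Re f ≤ 1, f(0) real ≥ 0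
    (∀ f h g : ℂ → ℂ, ∀ a b : ℕ → ℂ,
      b 0 = 0 →
      DifferentiableOn ℂ h (Metric.ball 0 1) →
      DifferentiableOn ℂ g (Metric.ball 0 1) →
      g 0 = 0 →
      (∀ z ∈ Metric.ball (0 : ℂ) 1, f z = h z + (starRingEnd ℂ) (g z)) →
      (∀ z ∈ Metric.ball (0 : ℂ) 1, HasSum (fun j : ℕ => a j * z ^ j) (h z)) →
      (∀ z ∈ Metric.ball (0 : ℂ) 1, HasSum (fun j : ℕ => b j * z ^ j) (g z)) →
      (∀ z ∈ Metric.ball (0 : ℂ) 1, (f z).re ≤ 1) →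
      (f 0).im = 0 → 0 ≤ (f 0).re →
      ∀ z : ℂ, ‖z‖ ≤ 1 / 3 →
        ∀ s : Finset ℕ, ∑ j ∈ s, ‖(a j + b j) * z ^ j‖ ≤ 1) ∧
    -- sharpness of the constant 1/3
    (∀ r : ℝ, 1 / 3 < r →
      ∃ f h g : ℂ → ℂ, ∃ a b : ℕ → ℂ,
        b 0 = 0 ∧
        DifferentiableOn ℂ h (Metric.ball 0 1) ∧
        DifferentiableOn ℂ g (Metric.ball 0 1) ∧
        g 0 = 0 ∧
        (∀ z ∈ Metric.ball (0 : ℂ) 1, f z = h z + (starRingEnd ℂ) (g z)) ∧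
        (∀ z ∈ Metric.ball (0 : ℂ) 1, HasSum (fun j : ℕ => a j * z ^ j) (h z)) ∧
        (∀ z ∈ Metric.ball (0 : ℂ) 1, HasSum (fun j : ℕ => b j * z ^ j) (g z)) ∧
        (∀ z ∈ Metric.ball (0 : ℂ) 1, (f z).re ≤ 1) ∧
        (f 0).im = 0 ∧ 0 ≤ (f 0).re ∧
        ∃ s : Finset ℕ, 1 < ∑ j ∈ s, ‖a j + b j‖ * r ^ j) := by
  refine ⟨fun f h g a b _ hh hg hg0 hfhg ha hb hre him hre0 z hz s ↦ ?_, fun r hr ↦ ?_⟩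
  · have hF : ∀ w ∈ ball (0 : ℂ) 1, HasSum (fun j ↦ (a j + b j) * w ^ j) (h w + g w) :=
      fun w hw ↦ by simpa only [add_mul] using (ha w hw).add (hb w hw)
    have hreF : ∀ w ∈ ball (0 : ℂ) 1, (h w + g w).re ≤ 1 :=
      fun w hw ↦ by simpa [hfhg w hw] using hre w hw
    have hc0 : a 0 + b 0 = f 0 := by
      rw [← apply_zero_eq_coeff_zero hF, hfhg 0 (mem_ball_self one_pos), hg0, map_zero]
    have hnorm : ‖a 0 + b 0‖ = (a 0 + b 0).re := by
      rw [hc0, ← (abs_re_eq_norm.2 him), abs_of_nonneg hre0]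
    exact sum_norm_mul_pow_le_one hnorm.le
      (fun j hj ↦ norm_coeff_le_of_re_le_one_s15 hF (hh.continuousOn.add hg.continuousOn) hreF hj)
      hz s
  · obtain ⟨s, hs⟩ := exists_one_lt_sum_norm_mul_pow hr
    refine ⟨fun z ↦ -2 * z / (1 - z), fun z ↦ -2 * z / (1 - z), fun _ ↦ 0,
      fun j ↦ if j = 0 then 0 else -2, fun _ ↦ 0, rfl, ?_, differentiableOn_const 0, rfl,
      fun z _ ↦ by simp, fun z hz ↦ hasSum_neg_two_mul_div_one_sub (mem_ball_zero_iff.1 hz),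
      fun z _ ↦ by simp,
      fun z hz ↦ re_neg_two_mul_div_one_sub_le_one (mem_ball_zero_iff.1 hz), by simp, by simp,
      s, by simpa using hs⟩
    exact DifferentiableOn.div (by fun_prop) (by fun_prop) fun z hz h1 ↦ by
      simp [← sub_eq_zero.1 h1] at hz
end
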